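/- arXiv:1808.00128 — 8 statements merged into one kernel-verified Lean document; each statement's English description precedes it below -/
import Mathlib

section
/- Let ψ be a normalized vector with decomposition ψ = Σ_j c_j φ_j into unit vectors, and let Ω be the random sparsified vector as in the Sparsification Lemma with k terms. If k ≥ ‖c‖₁²/δ², then E[⟨Ω,Ω⟩ − 1] ≤ δ². -/
/-!
Write `Ω = (‖c‖₁ / k) ∑_α w (f α)`, where `w j = (c j / |c j|) • φ j` and `f : Fin k → Fin N` is a
sequence of `k` independent samples from the weights `p j = |c j| / ‖c‖₁`. Expanding the square,
the `k` diagonal terms contribute `∑ p j ‖w j‖² ≤ 1` each and, by independence, the `k (k - 1)`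
off-diagonal ones contribute `‖∑ p j • w j‖² = ‖ψ‖² / ‖c‖₁²` each. Hence
`E ‖Ω‖² - 1 ≤ (‖c‖₁² - 1) / k ≤ δ²`.
-/

open Finset

noncomputable def iidExpectation {ι : Type*} [Fintype ι] (p : ι → ℝ) (k : ℕ)
    (F : (Fin k → ι) → ℝ) : ℝ :=
  ∑ f, (∏ α, p (f α)) * F f

section iidExpectation

variable {ι : Type*} [Fintype ι] {p : ι → ℝ} {k : ℕ}

theorem iidExpectation_add (F G : (Fin k → ι) → ℝ) :
    iidExpectation p k (fun f => F f + G f) = iidExpectation p k F + iidExpectation p k G := by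
  simp only [iidExpectation, mul_add, sum_add_distrib]

theorem iidExpectation_sub (F G : (Fin k → ι) → ℝ) :
    iidExpectation p k (fun f => F f - G f) = iidExpectation p k F - iidExpectation p k G := by
  simp only [iidExpectation, mul_sub, sum_sub_distrib]

theorem iidExpectation_const_mul (a : ℝ) (F : (Fin k → ι) → ℝ) :
    iidExpectation p k (fun f => a * F f) = a * iidExpectation p k F := by
  simp only [iidExpectation, mul_sum, mul_left_comm a]

theorem iidExpectation_succ (F : (Fin (k + 1) → ι) → ℝ) :
    iidExpectation p (k + 1) F = ∑ i, p i * iidExpectation p k (fun g => F (Fin.cons i g)) := by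
  simp only [iidExpectation, mul_sum]
  rw [← (Fin.consEquiv fun _ => ι).sum_comp, Fintype.sum_prod_type]
  simp only [Fin.prod_univ_succ, mul_assoc]
  rfl

theorem iidExpectation_const (hp : ∑ i, p i = 1) (a : ℝ) : iidExpectation p k (fun _ => a) = a := by
  rw [iidExpectation, ← sum_mul, ← Fintype.sum_pow, hp, one_pow, one_mul]

theorem iidExpectation_sum_apply (hp : ∑ i, p i = 1) (h : ι → ℝ) :
    iidExpectation p k (fun f => ∑ α, h (f α)) = k * ∑ i, p i * h i := by
  induction k with
  | zero => simp [iidExpectation]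
  | succ k ih =>
    simp only [iidExpectation_succ, Fin.sum_univ_succ, Fin.cons_zero, Fin.cons_succ,
      iidExpectation_add, iidExpectation_const hp, ih, mul_add, sum_add_distrib, ← sum_mul, hp]
    push_cast
    ring

theorem iidExpectation_sum_sum_apply (hp : ∑ i, p i = 1) (K : ι → ι → ℝ) :
    iidExpectation p k (fun f => ∑ α, ∑ β, K (f α) (f β)) =
      k * ∑ i, p i * K i i + k * (k - 1) * ∑ i, ∑ j, p i * p j * K i j := by
  induction k with
  | zero => simp [iidExpectation]
  | succ k ih =>
    have column (j : ι) := iidExpectation_sum_apply (k := k) hp (K · j)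
    simp only [iidExpectation_succ, Fin.sum_univ_succ, Fin.cons_zero, Fin.cons_succ,
      iidExpectation_add, iidExpectation_const hp, ih, sum_add_distrib,
      iidExpectation_sum_apply hp (K _), column]
    have row_sum : ∑ i, p i * ∑ j, p j * K i j = ∑ i, ∑ j, p i * p j * K i j := by
      simp only [mul_sum, mul_assoc]
    have column_sum : ∑ j, p j * ∑ i, p i * K i j = ∑ i, ∑ j, p i * p j * K i j := by
      simp only [mul_sum]
      rw [sum_comm]
      exact sum_congr rfl fun i _ => sum_congr rfl fun j _ => by ring
    simp only [mul_add, sum_add_distrib, mul_left_comm (p _) (k : ℝ), ← mul_sum, row_sum,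
      column_sum, ← sum_mul, hp]
    push_cast
    ring

end iidExpectation

theorem norm_sum_sq_eq_sum_sum_inner {α E : Type*} [Fintype α] [NormedAddCommGroup E]
    [InnerProductSpace ℝ E] (v : α → E) :
    ‖∑ a, v a‖ ^ 2 = ∑ a, ∑ b, inner ℝ (v a) (v b) := by
  rw [← real_inner_self_eq_norm_sq, sum_inner]
  simp only [inner_sum]

theorem iidExpectation_norm_sum_sq {ι E : Type*} [Fintype ι] [NormedAddCommGroup E]
    [InnerProductSpace ℝ E] {p : ι → ℝ} (hp : ∑ i, p i = 1) (k : ℕ) (w : ι → E) :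
    iidExpectation p k (fun f => ‖∑ α, w (f α)‖ ^ 2) =
      k * ∑ i, p i * ‖w i‖ ^ 2 + k * (k - 1) * ‖∑ i, p i • w i‖ ^ 2 := by
  simp only [norm_sum_sq_eq_sum_sum_inner]
  rw [iidExpectation_sum_sum_apply hp (fun i j => inner ℝ (w i) (w j))]
  simp only [real_inner_self_eq_norm_sq, real_inner_smul_left, real_inner_smul_right,
    ← mul_assoc, mul_comm (p _) (p _)]

theorem norm_smul_div_norm_smul {V : Type*} [AddCommGroup V] [Module ℂ V] (z : ℂ) (x : V) :
    ‖z‖ • (z / ‖z‖) • x = z • x := by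
  rcases eq_or_ne z 0 with rfl | hz
  · simp
  · rw [← smul_assoc, Complex.real_smul, mul_div_cancel₀ _ (by simpa using hz)]

theorem sparsification_norm_expectation_general
    {V : Type*} [NormedAddCommGroup V] [InnerProductSpace ℂ V]
    (N k : ℕ) (δ : ℝ) (hδ : 0 < δ)
    (ψ : V) (hψ : ‖ψ‖ = 1)
    (c : Fin N → ℂ) (φ : Fin N → V) (hφ : ∀ j, ‖φ j‖ = 1)
    (hdec : ψ = ∑ j, c j • φ j)
    (hkb : (∑ j, ‖c j‖) ^ 2 / δ ^ 2 ≤ (k : ℝ)) :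
    ∑ f : Fin k → Fin N,
      (∏ α, ‖c (f α)‖ / (∑ j, ‖c j‖)) *
        (‖((∑ j, ‖c j‖) / (k : ℝ)) •
            ∑ α, ((c (f α) / (‖c (f α)‖ : ℂ)) • φ (f α))‖ ^ 2 - 1)
      ≤ δ ^ 2 := by
  let _ := InnerProductSpace.rclikeToReal ℂ V
  set L := ∑ j, ‖c j‖
  set p : Fin N → ℝ := fun j => ‖c j‖ / L
  set w : Fin N → V := fun j => (c j / (‖c j‖ : ℂ)) • φ j
  have hL : 1 ≤ L := by
    rw [← hψ, hdec]
    refine (norm_sum_le _ _).trans_eq (sum_congr rfl fun j _ => ?_)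
    rw [norm_smul, hφ j, mul_one]
  have hp : ∑ j, p j = 1 := by rw [← sum_div, div_self (by positivity)]
  have hmean : ∑ j, p j • w j = L⁻¹ • ψ := by
    rw [hdec, smul_sum]
    refine sum_congr rfl fun j _ => ?_
    rw [show p j = L⁻¹ * ‖c j‖ from div_eq_inv_mul .., mul_smul, norm_smul_div_norm_smul]
  have hw (j : Fin N) : ‖w j‖ ≤ 1 := by
    simp only [w, norm_smul, hφ, mul_one, norm_div, Complex.norm_real, norm_norm]
    exact div_self_le_one _
  change iidExpectation p k (fun f => ‖(L / k) • ∑ α, w (f α)‖ ^ 2 - 1) ≤ δ ^ 2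
  simp only [norm_smul, mul_pow, Real.norm_eq_abs, sq_abs]
  rw [iidExpectation_sub, iidExpectation_const_mul, iidExpectation_const hp,
    iidExpectation_norm_sum_sq hp, hmean, norm_smul, hψ]
  have hs : ∑ j, p j * ‖w j‖ ^ 2 ≤ 1 := hp ▸ sum_le_sum fun j _ =>
    mul_le_of_le_one_right (by positivity) (pow_le_one₀ (norm_nonneg _) (hw j))
  rw [norm_inv, Real.norm_of_nonneg (by positivity), mul_one]
  rcases k.eq_zero_or_pos with rfl | hk
  · norm_num
    linarith [sq_nonneg δ]
  have hLk : L ^ 2 ≤ k * δ ^ 2 := (div_le_iff₀ (by positivity)).1 hkb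
  calc (L / k) ^ 2 * (k * ∑ j, p j * ‖w j‖ ^ 2 + k * (k - 1) * L⁻¹ ^ 2) - 1
      = (L ^ 2 * ∑ j, p j * ‖w j‖ ^ 2 - 1) / k := by field_simp; ring
    _ ≤ L ^ 2 / k := by gcongr; nlinarith
    _ ≤ δ ^ 2 := by rwa [div_le_iff₀ (by positivity), mul_comm]

/-- Sparsification tail bound, first part: `E[⟨Ω,Ω⟩ − 1] ≤ δ²` when `k ≥ ‖c‖₁²/δ²`. -/
theorem sparsification_norm_expectation
    {V : Type*} [NormedAddCommGroup V] [InnerProductSpace ℂ V]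
    (N k : ℕ) (hk : 0 < k) (δ : ℝ) (hδ : 0 < δ)
    (ψ : V) (hψ : ‖ψ‖ = 1)
    (c : Fin N → ℂ) (φ : Fin N → V) (hφ : ∀ j, ‖φ j‖ = 1)
    (hdec : ψ = ∑ j, c j • φ j)
    (hkb : (∑ j, ‖c j‖) ^ 2 / δ ^ 2 ≤ (k : ℝ)) :
    ∑ f : Fin k → Fin N,
      (∏ α, ‖c (f α)‖ / (∑ j, ‖c j‖)) *
        (‖((∑ j, ‖c j‖) / (k : ℝ)) •
            ∑ α, ((c (f α) / (‖c (f α)‖ : ℂ)) • φ (f α))‖ ^ 2 - 1)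
      ≤ δ ^ 2 :=
  sparsification_norm_expectation_general N k δ hδ ψ hψ c φ hφ hdec hkb
end

section
/- Let ψ be a unit vector in a finite-dimensional complex Hilbert space, S a finite spanning set of unit vectors, F(ψ) = max_{φ∈S}|⟨φ,ψ⟩|², and ξ(ψ) the minimum of ‖c‖₁² over decompositions ψ = Σ c_j φ_j with φ_j ∈ S. If Q is a finite group of unitaries with |ψ⟩⟨ψ| = (1/|Q|)Σ_{q∈Q} q and each q maps S into S (up to phase), then ξ(ψ) = 1/F(ψ). -/
/-!
For any decomposition `ψ = ∑ c φ • φ` over `S`, `1 = ⟪ψ, ψ⟫ = ∑ c φ ⟪ψ, φ⟫ ≤ ‖c‖₁ √F`, so every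
cost `‖c‖₁²` is at least `1 / F`. Conversely, let `φ₀ ∈ S` maximize `|⟪φ, ψ⟫|` and put
`a = ⟪ψ, φ₀⟫`. Applying the projector identity to `φ₀` gives `ψ = (|Q| a)⁻¹ ∑_q q φ₀`, and each
`q φ₀` is a phase times an element of `S`; collecting terms gives a decomposition with
`‖c‖₁ ≤ 1 / |a| = 1 / √F`. If `a = 0` there is no decomposition at all, and both sides vanish
by the conventions `sInf ∅ = 0` and `1 / 0 = 0`.
-/

open scoped InnerProductSpace
open Finset

section Extent

variable (𝕜 : Type*) {V : Type*} [RCLike 𝕜] [NormedAddCommGroup V] [InnerProductSpace 𝕜 V]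

def decompositionCosts (S : Finset V) (ψ : V) : Set ℝ :=
  { r | ∃ c : V → 𝕜, ψ = ∑ φ ∈ S, c φ • φ ∧ r = (∑ φ ∈ S, ‖c φ‖) ^ 2 }

def fidelity (S : Finset V) (hS : S.Nonempty) (ψ : V) : ℝ :=
  S.sup' hS fun φ => ‖⟪φ, ψ⟫_𝕜‖ ^ 2

end Extent

section Decomposition

variable {𝕜 : Type*} {V : Type*} [RCLike 𝕜] [NormedAddCommGroup V] [InnerProductSpace 𝕜 V]

lemma exists_sum_smul_eq_of_forall_mem {ι : Type*} [Fintype ι] [DecidableEq V]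
    (S : Finset V) (w : ι → 𝕜) (f : ι → V) (hf : ∀ i, f i ∈ S) :
    ∃ c : V → 𝕜, ∑ i, w i • f i = ∑ φ ∈ S, c φ • φ ∧ ∑ φ ∈ S, ‖c φ‖ ≤ ∑ i, ‖w i‖ := by
  have hmaps : ∀ i ∈ (univ : Finset ι), f i ∈ S := fun i _ => hf i
  refine ⟨fun φ => ∑ i with f i = φ, w i, ?_, ?_⟩
  · rw [← sum_fiberwise_of_maps_to hmaps]
    refine sum_congr rfl fun φ _ => ?_
    rw [sum_smul]
    exact sum_congr rfl fun i hi => by rw [(mem_filter.1 hi).2]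
  · rw [← sum_fiberwise_of_maps_to hmaps]
    exact sum_le_sum fun φ _ => norm_sum_le _ _

lemma one_le_sum_norm_mul_of_eq_sum_smul {S : Finset V} {ψ : V} (hψ : ‖ψ‖ = 1) {c : V → 𝕜}
    (hc : ψ = ∑ φ ∈ S, c φ • φ) {M : ℝ} (hM : ∀ φ ∈ S, ‖⟪φ, ψ⟫_𝕜‖ ≤ M) :
    1 ≤ (∑ φ ∈ S, ‖c φ‖) * M := by
  have hexpand : (1 : 𝕜) = ∑ φ ∈ S, c φ * ⟪ψ, φ⟫_𝕜 := by
    calc (1 : 𝕜) = ⟪ψ, ψ⟫_𝕜 := by rw [inner_self_eq_norm_sq_to_K, hψ]; norm_num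
      _ = ⟪ψ, ∑ φ ∈ S, c φ • φ⟫_𝕜 := by rw [← hc]
      _ = ∑ φ ∈ S, c φ * ⟪ψ, φ⟫_𝕜 := by simp only [inner_sum, inner_smul_right]
  calc (1 : ℝ) = ‖∑ φ ∈ S, c φ * ⟪ψ, φ⟫_𝕜‖ := by rw [← hexpand, norm_one]
    _ ≤ ∑ φ ∈ S, ‖c φ‖ * M := by
      refine (norm_sum_le _ _).trans (sum_le_sum fun φ hφ => ?_)
      rw [norm_mul, norm_inner_symm]
      exact mul_le_mul_of_nonneg_left (hM φ hφ) (norm_nonneg _)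
    _ = (∑ φ ∈ S, ‖c φ‖) * M := (sum_mul ..).symm

lemma one_le_mul_fidelity_of_mem_decompositionCosts {S : Finset V} (hS : S.Nonempty) {ψ : V}
    (hψ : ‖ψ‖ = 1) {r : ℝ} (hr : r ∈ decompositionCosts 𝕜 S ψ) :
    1 ≤ r * fidelity 𝕜 S hS ψ := by
  obtain ⟨c, hc, rfl⟩ := hr
  set F := fidelity 𝕜 S hS ψ
  have hbound : ∀ φ ∈ S, ‖⟪φ, ψ⟫_𝕜‖ ^ 2 ≤ F := fun φ hφ =>
    le_sup' (fun φ => ‖⟪φ, ψ⟫_𝕜‖ ^ 2) hφ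
  have hF : 0 ≤ F := (sq_nonneg _).trans (hbound _ hS.choose_spec)
  have h := one_le_sum_norm_mul_of_eq_sum_smul hψ hc fun φ hφ =>
    Real.le_sqrt_of_sq_le (hbound φ hφ)
  calc 1 ≤ ((∑ φ ∈ S, ‖c φ‖) * √F) ^ 2 := one_le_pow₀ h
    _ = (∑ φ ∈ S, ‖c φ‖) ^ 2 * F := by rw [mul_pow, Real.sq_sqrt hF]

lemma exists_eq_sum_smul_of_average_eq {ι : Type*} [Fintype ι] [Nonempty ι] [DecidableEq V]
    {S : Finset V} {ψ : V} {a : 𝕜} (ha : a ≠ 0) {l : ι → 𝕜} {φ' : ι → V}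
    (havg : (Fintype.card ι : 𝕜)⁻¹ • ∑ i, l i • φ' i = a • ψ) (hl : ∀ i, ‖l i‖ ≤ 1)
    (hφ' : ∀ i, φ' i ∈ S) :
    ∃ c : V → 𝕜, ψ = ∑ φ ∈ S, c φ • φ ∧ ∑ φ ∈ S, ‖c φ‖ ≤ ‖a‖⁻¹ := by
  obtain ⟨c, hc, hcnorm⟩ :=
    exists_sum_smul_eq_of_forall_mem S (fun i => (a⁻¹ * (Fintype.card ι : 𝕜)⁻¹) * l i) φ' hφ'
  refine ⟨c, ?_, hcnorm.trans ?_⟩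
  · rw [← hc]
    simp only [mul_smul, ← smul_sum, havg, inv_smul_smul₀ ha]
  · calc ∑ i, ‖(a⁻¹ * (Fintype.card ι : 𝕜)⁻¹) * l i‖
          ≤ ∑ _i : ι, ‖a‖⁻¹ * (Fintype.card ι : ℝ)⁻¹ := by
          refine sum_le_sum fun i _ => ?_
          rw [norm_mul, norm_mul, norm_inv, norm_inv, RCLike.norm_natCast]
          exact mul_le_of_le_one_right (by positivity) (hl i)
      _ = ‖a‖⁻¹ := by
          rw [sum_const, card_univ, nsmul_eq_mul]
          field_simp

lemma isLeast_one_div_of_forall_one_le_mul {s : Set ℝ} {F r : ℝ} (hF : 0 < F)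
    (hlow : ∀ x ∈ s, 1 ≤ x * F) (hr : r ∈ s) (hrF : r ≤ 1 / F) : IsLeast s (1 / F) := by
  have hlower : ∀ x ∈ s, 1 / F ≤ x := fun x hx => (div_le_iff₀ hF).2 (hlow x hx)
  exact ⟨le_antisymm hrF (hlower r hr) ▸ hr, hlower⟩

end Decomposition

theorem xi_eq_inv_fidelity_general
    {V : Type*} [NormedAddCommGroup V] [InnerProductSpace ℂ V]
    (S : Finset V) (hSne : S.Nonempty)
    (ψ : V) (hψ : ‖ψ‖ = 1)
    (Q : Subgroup (V ≃ₗᵢ[ℂ] V)) [Fintype Q]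
    (hproj : ∀ v : V,
      ((Fintype.card Q : ℂ))⁻¹ • ∑ q : Q, (q : V ≃ₗᵢ[ℂ] V) v = (inner ℂ ψ v : ℂ) • ψ)
    (hclosed : ∀ q : Q, ∀ φ ∈ S, ∃ (l : ℂ) (φ' : V),
      ‖l‖ = 1 ∧ φ' ∈ S ∧ (q : V ≃ₗᵢ[ℂ] V) φ = l • φ') :
    sInf { r : ℝ | ∃ c : V → ℂ, ψ = ∑ φ ∈ S, c φ • φ ∧ r = (∑ φ ∈ S, ‖c φ‖) ^ 2 }
      = 1 / (S.sup' hSne fun φ => ‖(inner ℂ φ ψ : ℂ)‖ ^ 2) := by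
  classical
  change sInf (decompositionCosts ℂ S ψ) = 1 / fidelity ℂ S hSne ψ
  obtain ⟨φ₀, hφ₀S, hφ₀⟩ := exists_mem_eq_sup' hSne fun φ => ‖⟪φ, ψ⟫_ℂ‖ ^ 2
  have hF : fidelity ℂ S hSne ψ = ‖⟪ψ, φ₀⟫_ℂ‖ ^ 2 := by rw [fidelity, hφ₀, norm_inner_symm]
  have hlow r (hr : r ∈ decompositionCosts ℂ S ψ) :=
    one_le_mul_fidelity_of_mem_decompositionCosts hSne hψ hr
  by_cases ha : ⟪ψ, φ₀⟫_ℂ = 0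
  · have hempty : decompositionCosts ℂ S ψ = ∅ :=
      Set.eq_empty_of_forall_notMem fun r hr => absurd (hlow r hr) (by simp [hF, ha])
    rw [hempty, Real.sInf_empty, hF, ha]
    simp
  · choose l φ' hl hφ' hφ₀_image using fun q : Q => hclosed q φ₀ hφ₀S
    have havg := hproj φ₀
    rw [sum_congr rfl fun q _ => hφ₀_image q] at havg
    obtain ⟨c, hc, hcnorm⟩ :=
      exists_eq_sum_smul_of_average_eq ha havg (fun q => (hl q).le) hφ'
    have hF0 : 0 < fidelity ℂ S hSne ψ := hF ▸ by positivity
    refine (isLeast_one_div_of_forall_one_le_mul hF0 hlow ⟨c, hc, rfl⟩ ?_).csInf_eq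
    rw [hF, one_div, ← inv_pow]
    exact pow_le_pow_left₀ (sum_nonneg fun _ _ => norm_nonneg _) hcnorm 2

/-- For a state `ψ` stabilized on average by a finite group of unitaries mapping the
set `S` of stabilizer states into itself up to phase, the stabilizer extent equals
the inverse stabilizer fidelity: `ξ(ψ) = 1/F(ψ)`. -/
theorem xi_eq_inv_fidelity
    {V : Type*} [NormedAddCommGroup V] [InnerProductSpace ℂ V] [FiniteDimensional ℂ V]
    (S : Finset V) (hSne : S.Nonempty) (hSunit : ∀ φ ∈ S, ‖φ‖ = 1)
    (hSspan : Submodule.span ℂ (S : Set V) = ⊤)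
    (ψ : V) (hψ : ‖ψ‖ = 1)
    (Q : Subgroup (V ≃ₗᵢ[ℂ] V)) [Fintype Q]
    (hproj : ∀ v : V,
      ((Fintype.card Q : ℂ))⁻¹ • ∑ q : Q, (q : V ≃ₗᵢ[ℂ] V) v = (inner ℂ ψ v : ℂ) • ψ)
    (hclosed : ∀ q : Q, ∀ φ ∈ S, ∃ (l : ℂ) (φ' : V),
      ‖l‖ = 1 ∧ φ' ∈ S ∧ (q : V ≃ₗᵢ[ℂ] V) φ = l • φ') :
    sInf { r : ℝ | ∃ c : V → ℂ, ψ = ∑ φ ∈ S, c φ • φ ∧ r = (∑ φ ∈ S, ‖c φ‖) ^ 2 }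
      = 1 / (S.sup' hSne fun φ => ‖(inner ℂ φ ψ : ℂ)‖ ^ 2) :=
  xi_eq_inv_fidelity_general S hSne ψ hψ Q hproj hclosed
end

section
/- Fix an integer n ≥ 1 and a real number t with 0 < t < 1. Let x¹,…,x^χ ∈ {0,1}ⁿ be distinct bit strings and let G be the χ×χ matrix with entries G_{ij} = t^{|xⁱ ⊕ xʲ|}, where |·| is Hamming weight and ⊕ is bitwise XOR. Then G is invertible, positive definite, and Σ_{i,j} (G⁻¹)_{ij} ≤ χ. -/
/-!
Expanding `t ^ d(a, b) = ∏ₖ (t + (1 - t) [aₖ = bₖ])` writes the Hamming kernel as a convex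
combination, with weights `(1 - t) ^ #T * t ^ (n - #T)`, of the kernels `[a|_T = b|_T]` for
`T ⊆ [n]`. Each of these is the kernel of a partition of the points, so its quadratic form is
the sum of the squared fiber sums of `v`: it is nonnegative, at least `(∑ v)² / χ` by
Cauchy–Schwarz, and equal to `‖v‖²` for `T = [n]`. Hence `G` is positive definite and
`(𝟙 ⬝ v)² ≤ χ · vᵀGv` for all `v`; at `v = G⁻¹𝟙` this reads `s² ≤ χ s` with `s = 𝟙ᵀG⁻¹𝟙`.
-/

open Finset Matrix

section FiberForm

variable {ι β R : Type*} [Fintype ι] [DecidableEq β] [CommRing R]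

theorem sum_sum_mul_ite_eq_sum_sq (f : ι → β) (v : ι → R) :
    ∑ i, ∑ j, v i * v j * (if f i = f j then 1 else 0) =
      ∑ b ∈ univ.image f, (∑ i with f i = b, v i) ^ 2 := by
  calc ∑ i, ∑ j, v i * v j * (if f i = f j then 1 else 0)
      = ∑ i, v i * ∑ j with f j = f i, v j := by
        simp only [sum_filter, mul_sum, mul_ite, mul_one, mul_zero, eq_comm]
    _ = ∑ b ∈ univ.image f, ∑ i with f i = b, v i * ∑ j with f j = b, v j := by
        rw [← sum_fiberwise_of_maps_to (g := f) (fun i _ => mem_image_of_mem f (mem_univ i))]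
        refine sum_congr rfl fun b _ => sum_congr rfl fun i hi => ?_
        rw [(mem_filter.1 hi).2]
    _ = _ := by simp only [sq, sum_mul]

theorem sum_sum_mul_ite_of_injective {f : ι → β} (hf : Function.Injective f) (v : ι → R) :
    ∑ i, ∑ j, v i * v j * (if f i = f j then 1 else 0) = ∑ i, v i ^ 2 := by
  classical
  simp [hf.eq_iff, sq]

variable [LinearOrder R] [IsStrictOrderedRing R]

theorem sum_sum_mul_ite_nonneg (f : ι → β) (v : ι → R) :
    0 ≤ ∑ i, ∑ j, v i * v j * (if f i = f j then 1 else 0) := by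
  rw [sum_sum_mul_ite_eq_sum_sq]
  positivity

theorem sq_sum_le_card_mul_sum_sum_mul_ite (f : ι → β) (v : ι → R) :
    (∑ i, v i) ^ 2 ≤ Fintype.card ι * ∑ i, ∑ j, v i * v j * (if f i = f j then 1 else 0) := by
  rw [sum_sum_mul_ite_eq_sum_sq, ← sum_fiberwise_of_maps_to (g := f)
    (fun i _ => mem_image_of_mem f (mem_univ i))]
  calc _ ≤ (#(univ.image f) : R) * ∑ b ∈ univ.image f, (∑ i with f i = b, v i) ^ 2 :=
        sq_sum_le_card_mul_sum_sq
    _ ≤ _ := by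
        gcongr
        exact card_image_le

end FiberForm

theorem pow_hammingDist_eq_sum {ι R : Type*} [Fintype ι] [DecidableEq ι] {β : ι → Type*}
    [∀ i, DecidableEq (β i)] [CommRing R] (t : R) (a b : ∀ i, β i) :
    t ^ hammingDist a b = ∑ T : Finset ι, (1 - t) ^ #T * t ^ (Fintype.card ι - #T) *
      if T.restrict a = T.restrict b then 1 else 0 := by
  have hfactor : t ^ hammingDist a b = ∏ k, ((1 - t) * (if a k = b k then 1 else 0) + t) := by
    calc t ^ hammingDist a b = ∏ k, if a k = b k then 1 else t := by
          simp [prod_ite, hammingDist]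
      _ = _ := prod_congr rfl fun k _ => by split_ifs <;> ring
  rw [hfactor, prod_add, powerset_univ]
  refine sum_congr rfl fun T _ => ?_
  rw [prod_mul_distrib, prod_const, prod_boole, prod_const, ← compl_eq_univ_sdiff, card_compl]
  have hrestrict : T.restrict a = T.restrict b ↔ ∀ i ∈ T, a i = b i := by
    simp [funext_iff, Finset.restrict]
  simp only [hrestrict]
  split_ifs <;> ring

theorem one_sub_pow_mul_pow_nonneg {R : Type*} [CommRing R] [PartialOrder R]
    [IsOrderedRing R] {t : R} (ht0 : 0 ≤ t) (ht1 : t ≤ 1) (k m : ℕ) :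
    0 ≤ (1 - t) ^ k * t ^ m :=
  mul_nonneg (pow_nonneg (sub_nonneg.2 ht1) k) (pow_nonneg ht0 m)

section HammingGram

variable {κ ι : Type*} [Fintype κ] [Fintype ι] [DecidableEq ι] {β : ι → Type*}
  [∀ i, DecidableEq (β i)]

def hammingGram (t : ℝ) (x : κ → ∀ i, β i) : Matrix κ κ ℝ :=
  Matrix.of fun i j => t ^ hammingDist (x i) (x j)

theorem dotProduct_hammingGram_mulVec (t : ℝ) (x : κ → ∀ i, β i) (v : κ → ℝ) :
    v ⬝ᵥ hammingGram t x *ᵥ v = ∑ T : Finset ι, (1 - t) ^ #T * t ^ (Fintype.card ι - #T) *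
      ∑ i, ∑ j, v i * v j * if T.restrict (x i) = T.restrict (x j) then 1 else 0 := by
  simp only [dotProduct, mulVec, hammingGram, of_apply, pow_hammingDist_eq_sum, mul_sum,
    sum_mul]
  symm
  rw [sum_comm]
  refine sum_congr rfl fun i _ => ?_
  rw [sum_comm]
  exact sum_congr rfl fun j _ => sum_congr rfl fun T _ => by ring

theorem posDef_hammingGram {t : ℝ} (ht0 : 0 ≤ t) (ht1 : t < 1) {x : κ → ∀ i, β i}
    (hx : Function.Injective x) : (hammingGram t x).PosDef := by
  rw [posDef_iff_dotProduct_mulVec]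
  refine ⟨?_, fun v hv => ?_⟩
  · ext i j
    simp [hammingGram, hammingDist_comm]
  have hinj : Function.Injective fun i => (univ : Finset ι).restrict (x i) :=
    fun i j h => hx (funext fun k => congrFun h ⟨k, mem_univ k⟩)
  rw [star_trivial, dotProduct_hammingGram_mulVec]
  -- the term `T = univ` alone is `(1 - t) ^ card ι * ∑ i, v i ^ 2`
  refine lt_of_lt_of_le ?_ (single_le_sum (fun T _ => ?_) (mem_univ univ))
  · rw [sum_sum_mul_ite_of_injective hinj, card_univ, Nat.sub_self, pow_zero, mul_one]
    obtain ⟨i, hi⟩ := Function.ne_iff.1 hv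
    exact mul_pos (pow_pos (sub_pos.2 ht1) _)
      (sum_pos' (fun j _ => sq_nonneg (v j)) ⟨i, mem_univ i, sq_pos_of_ne_zero hi⟩)
  · exact mul_nonneg (one_sub_pow_mul_pow_nonneg ht0 ht1.le _ _) (sum_sum_mul_ite_nonneg _ v)

theorem sq_sum_le_card_mul_dotProduct_hammingGram_mulVec {t : ℝ} (ht0 : 0 ≤ t) (ht1 : t ≤ 1)
    (x : κ → ∀ i, β i) (v : κ → ℝ) :
    (∑ i, v i) ^ 2 ≤ Fintype.card κ * (v ⬝ᵥ hammingGram t x *ᵥ v) := by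
  have hsum : ∑ T : Finset ι, (1 - t) ^ #T * t ^ (Fintype.card ι - #T) = 1 := by
    rw [Fintype.sum_pow_mul_eq_add_pow, sub_add_cancel, one_pow]
  rw [dotProduct_hammingGram_mulVec, mul_sum]
  calc (∑ i, v i) ^ 2
      = ∑ T : Finset ι, (1 - t) ^ #T * t ^ (Fintype.card ι - #T) * (∑ i, v i) ^ 2 := by
        rw [← sum_mul, hsum, one_mul]
    _ ≤ _ := sum_le_sum fun T _ => by
        rw [mul_left_comm]
        exact mul_le_mul_of_nonneg_left (sq_sum_le_card_mul_sum_sum_mul_ite _ v)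
          (one_sub_pow_mul_pow_nonneg ht0 ht1 _ _)

end HammingGram

theorem dotProduct_nonsing_inv_mulVec_le {n K : Type*} [Fintype n] [DecidableEq n] [Field K]
    [LinearOrder K] [IsStrictOrderedRing K] {G : Matrix n n K} (hG : IsUnit G) (u : n → K)
    {c : K} (hc : 0 ≤ c) (h : ∀ v, (u ⬝ᵥ v) ^ 2 ≤ c * (v ⬝ᵥ G *ᵥ v)) :
    u ⬝ᵥ G⁻¹ *ᵥ u ≤ c := by
  have hGv : G *ᵥ (G⁻¹ *ᵥ u) = u := by
    rw [mulVec_mulVec, mul_nonsing_inv G ((isUnit_iff_isUnit_det G).1 hG), one_mulVec]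
  have := h (G⁻¹ *ᵥ u)
  rw [hGv, dotProduct_comm (G⁻¹ *ᵥ u)] at this
  nlinarith

/-- The Gram matrix `G_{ij} = t^{|xⁱ ⊕ xʲ|}` of distinct bit strings is invertible,
positive definite, and the sum of the entries of its inverse is at most `χ`. -/
theorem gram_matrix_bound (n χ : ℕ) (t : ℝ) (ht0 : 0 < t) (ht1 : t < 1)
    (x : Fin χ → (Fin n → Bool)) (hx : Function.Injective x) :
    IsUnit (Matrix.of fun i j => t ^ hammingDist (x i) (x j) : Matrix (Fin χ) (Fin χ) ℝ)
    ∧ (Matrix.of fun i j => t ^ hammingDist (x i) (x j) : Matrix (Fin χ) (Fin χ) ℝ).PosDef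
    ∧ ∑ i, ∑ j,
        (Matrix.of fun i j => t ^ hammingDist (x i) (x j) : Matrix (Fin χ) (Fin χ) ℝ)⁻¹ i j
      ≤ (χ : ℝ) := by
  have hG : (hammingGram t x).PosDef := posDef_hammingGram ht0.le ht1 hx
  refine ⟨hG.isUnit, hG, ?_⟩
  have hbound := dotProduct_nonsing_inv_mulVec_le hG.isUnit 1 (Nat.cast_nonneg χ)
    fun v => by simpa [one_dotProduct] using
      sq_sum_le_card_mul_dotProduct_hammingGram_mulVec ht0.le ht1.le x v
  simpa [hammingGram, one_dotProduct, mulVec, dotProduct] using hbound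
end

section
/- Let A be a symmetric real χ×χ matrix satisfying: A_{ii} = 1 for all i, 0 ≤ A_{ij} < 1 for i ≠ j, and A_{ij} ≥ min(A_{ik}, A_{jk}) for all i,j,k (ultrametric condition). Then A is positive definite (hence invertible) and all off-diagonal entries of A⁻¹ are ≤ 0. -/
/-!
Let `t` be the smallest off-diagonal entry of `A` and `p q` a pair attaining it. By the
ultrametric inequality, `A i j = t` whenever `A i p > t ≥ A j p`, so `D = A - t • 𝟙𝟙ᵀ` is block
diagonal for this partition, and each block is again strictly ultrametric. By induction the blocks,
hence `D`, have inverses that are diagonally dominant Stieltjes matrices. Finally `A = D + t • 𝟙𝟙ᵀ`,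
and by Sherman–Morrison `A⁻¹ = D⁻¹ - c • u uᵀ` with `u = D⁻¹ 𝟙 ≥ 0` and `0 ≤ c ≤ 1 / ∑ u`, which
keeps the off-diagonal entries nonpositive and the row sums nonnegative.
-/

namespace Matrix

variable {ι κ : Type*}

section Potential

variable [Fintype ι] [Fintype κ]

theorem PosDef.fromBlocks_zero {R : Type*} [CommRing R] [PartialOrder R] [StarRing R]
    [IsStrictOrderedRing R] {X : Matrix ι ι R} {Y : Matrix κ κ R} (hX : X.PosDef) (hY : Y.PosDef) :
    (fromBlocks X 0 0 Y).PosDef := by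
  refine .of_dotProduct_mulVec_pos (hX.isHermitian.fromBlocks (by simp) hY.isHermitian)
    fun x hx => ?_
  have hquad : star x ⬝ᵥ (fromBlocks X 0 0 Y *ᵥ x) =
      star (x ∘ Sum.inl) ⬝ᵥ (X *ᵥ (x ∘ Sum.inl)) +
        star (x ∘ Sum.inr) ⬝ᵥ (Y *ᵥ (x ∘ Sum.inr)) := by
    simp [dotProduct, mulVec, Fintype.sum_sum_type]
  have hX0 := hX.posSemidef.dotProduct_mulVec_nonneg (x ∘ Sum.inl)
  have hY0 := hY.posSemidef.dotProduct_mulVec_nonneg (x ∘ Sum.inr)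
  rw [hquad]
  rcases not_and_or.mp fun h : x ∘ Sum.inl = 0 ∧ x ∘ Sum.inr = 0 =>
    hx (by rw [← Sum.elim_comp_inl_inr x, h.1, h.2]; exact Sum.elim_zero_zero) with h | h
  · exact add_pos_of_pos_of_nonneg (hX.dotProduct_mulVec_pos h) hY0
  · exact add_pos_of_nonneg_of_pos hX0 (hY.dotProduct_mulVec_pos h)

variable [DecidableEq ι] [DecidableEq κ]

/-- The Sherman–Morrison formula. -/
theorem inv_add_vecMulVec {K : Type*} [Field K] {A : Matrix ι ι K} (hA : IsUnit A)
    {a b : ι → K} (h : 1 + b ⬝ᵥ A⁻¹ *ᵥ a ≠ 0) :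
    (A + vecMulVec a b)⁻¹
      = A⁻¹ - (1 + b ⬝ᵥ A⁻¹ *ᵥ a)⁻¹ • vecMulVec (A⁻¹ *ᵥ a) (b ᵥ* A⁻¹) := by
  have hAA : A * A⁻¹ = 1 := mul_nonsing_inv A ((isUnit_iff_isUnit_det A).mp hA)
  refine inv_eq_right_inv ?_
  rw [add_mul, mul_sub, mul_sub, Matrix.mul_smul, Matrix.mul_smul, mul_vecMulVec, mul_vecMulVec,
    vecMulVec_mul, mulVec_mulVec, hAA, one_mulVec, vecMulVec_mulVec, op_smul_eq_smul,
    smul_vecMulVec, smul_smul]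
  linear_combination (norm := module) (inv_mul_cancel₀ h).symm • vecMulVec a (b ᵥ* A⁻¹)

/-- `A⁻¹` is a row diagonally dominant Stieltjes matrix; Dellacherie, Martínez and San Martín call
such an `A` a (symmetric) potential. -/
structure IsSymmPotential (A : Matrix ι ι ℝ) : Prop where
  posDef : A.PosDef
  inv_apply_nonpos : ∀ i j, i ≠ j → A⁻¹ i j ≤ 0
  inv_mulVec_one_nonneg : 0 ≤ A⁻¹ *ᵥ 1

theorem isSymmPotential_diagonal {d : ι → ℝ} (hd : ∀ i, 0 < d i) :
    (diagonal d).IsSymmPotential := by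
  have hinv : (diagonal d)⁻¹ = diagonal d⁻¹ := by
    refine inv_eq_left_inv ?_
    rw [diagonal_mul_diagonal, ← diagonal_one]
    exact congrArg diagonal (funext fun i => inv_mul_cancel₀ (hd i).ne')
  refine ⟨.diagonal hd, fun i j hij => by simp [hinv, hij], fun i => ?_⟩
  simpa [hinv, mulVec_diagonal] using (hd i).le

theorem IsSymmPotential.submatrix_equiv {A : Matrix ι ι ℝ} (hA : A.IsSymmPotential)
    (e : κ ≃ ι) : (A.submatrix e e).IsSymmPotential where
  posDef := hA.posDef.submatrix e.injective
  inv_apply_nonpos i j hij := by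
    rw [inv_submatrix_equiv]
    exact hA.inv_apply_nonpos _ _ (e.injective.ne hij)
  inv_mulVec_one_nonneg i := by
    rw [inv_submatrix_equiv, submatrix_mulVec_equiv]
    exact hA.inv_mulVec_one_nonneg (e i)

theorem IsSymmPotential.fromBlocks_zero {X : Matrix ι ι ℝ} {Y : Matrix κ κ ℝ}
    (hX : X.IsSymmPotential) (hY : Y.IsSymmPotential) :
    (fromBlocks X 0 0 Y).IsSymmPotential := by
  have hinv : (fromBlocks X 0 0 Y)⁻¹ = fromBlocks X⁻¹ 0 0 Y⁻¹ := by
    rw [inv_fromBlocks_zero₂₁_of_isUnit_iff _ _ _ (iff_of_true hX.posDef.isUnit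
      hY.posDef.isUnit)]
    simp
  refine ⟨?_, ?_, ?_⟩
  · exact hX.posDef.fromBlocks_zero hY.posDef
  · rw [hinv]
    rintro (i | i) (j | j) hij
    · exact hX.inv_apply_nonpos i j (by rintro rfl; exact hij rfl)
    · exact le_rfl
    · exact le_rfl
    · exact hY.inv_apply_nonpos i j (by rintro rfl; exact hij rfl)
  · rw [hinv]
    rintro (i | i)
    · simpa [fromBlocks_mulVec] using hX.inv_mulVec_one_nonneg i
    · simpa [fromBlocks_mulVec] using hY.inv_mulVec_one_nonneg i

theorem IsSymmPotential.add_smul_vecMulVec_one {D : Matrix ι ι ℝ} (hD : D.IsSymmPotential)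
    {t : ℝ} (ht : 0 ≤ t) : (D + t • vecMulVec 1 1).IsSymmPotential := by
  set u := D⁻¹ *ᵥ 1 with hu_def
  set s := 1 ⬝ᵥ u
  have hu : 0 ≤ u := hD.inv_mulVec_one_nonneg
  have hs : 0 ≤ s := dotProduct_nonneg_of_nonneg zero_le_one hu
  have hts : 0 < 1 + t * s := by positivity
  have hsymm : 1 ᵥ* D⁻¹ = u := by
    rw [← mulVec_transpose, ← conjTranspose_eq_transpose_of_trivial, hD.posDef.inv.isHermitian.eq]
  have hinv : (D + t • vecMulVec 1 1)⁻¹ = D⁻¹ - (t / (1 + t * s)) • vecMulVec u u := by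
    rw [← smul_vecMulVec, inv_add_vecMulVec hD.posDef.isUnit, mulVec_smul, dotProduct_smul,
      hsymm, smul_vecMulVec, smul_smul]
    · rw [div_eq_inv_mul]
      rfl
    · rw [mulVec_smul, dotProduct_smul]
      exact hts.ne'
  refine ⟨?_, ?_, ?_⟩
  · refine hD.posDef.add_posSemidef (PosSemidef.smul ?_ ht)
    simpa using posSemidef_vecMulVec_self_star (1 : ι → ℝ)
  · intro i j hij
    rw [hinv, sub_apply, smul_apply, vecMulVec_apply, smul_eq_mul]
    have := hD.inv_apply_nonpos i j hij
    have := mul_nonneg (mul_nonneg (div_nonneg ht hts.le) (hu i)) (hu j)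
    linarith
  · rw [hinv, sub_mulVec, smul_mulVec, vecMulVec_mulVec, op_smul_eq_smul, ← hu_def, smul_smul]
    have : u - (t / (1 + t * s) * (u ⬝ᵥ 1)) • u = (1 + t * s)⁻¹ • u := by
      have hc : 1 - t / (1 + t * s) * s = (1 + t * s)⁻¹ := by
        field_simp
        ring
      rw [dotProduct_comm, ← hc, sub_smul, one_smul]
    rw [this]
    exact smul_nonneg (inv_nonneg.mpr hts.le) hu

theorem IsSymmPotential.of_toSquareBlockProp {D : Matrix ι ι ℝ} (P : ι → Prop) [DecidablePred P]
    (hPD : ∀ i j, P i → ¬P j → D i j = 0 ∧ D j i = 0)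
    (h₁ : (D.toSquareBlockProp P).IsSymmPotential)
    (h₂ : (D.toSquareBlockProp (¬P ·)).IsSymmPotential) : D.IsSymmPotential := by
  have hD : D = (fromBlocks (D.toSquareBlockProp P) 0 0 (D.toSquareBlockProp (¬P ·))).submatrix
      (Equiv.sumCompl P).symm (Equiv.sumCompl P).symm := by
    ext i j
    by_cases hi : P i <;> by_cases hj : P j <;> simp [hi, hj, hPD, toSquareBlockProp_def]
  rw [hD]
  exact (h₁.fromBlocks_zero h₂).submatrix_equiv _

end Potential

structure IsStrictlyUltrametric (A : Matrix ι ι ℝ) : Prop where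
  isSymm : A.IsSymm
  nonneg : ∀ i j, 0 ≤ A i j
  min_le : ∀ i j k, min (A i k) (A j k) ≤ A i j
  lt_diag : ∀ i j, i ≠ j → A i j < A i i
  diag_pos : ∀ i, 0 < A i i

namespace IsStrictlyUltrametric

variable {A : Matrix ι ι ℝ}

theorem submatrix (hA : A.IsStrictlyUltrametric) {f : κ → ι} (hf : Function.Injective f) :
    (A.submatrix f f).IsStrictlyUltrametric where
  isSymm := hA.isSymm.submatrix f
  nonneg i j := hA.nonneg (f i) (f j)
  min_le i j k := hA.min_le (f i) (f j) (f k)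
  lt_diag i j hij := hA.lt_diag (f i) (f j) (hf.ne hij)
  diag_pos i := hA.diag_pos (f i)

theorem sub_smul_vecMulVec_one (hA : A.IsStrictlyUltrametric) {t : ℝ}
    (ht : ∀ i j, i ≠ j → t ≤ A i j) (ht' : ∀ i, t < A i i) :
    (A - t • vecMulVec 1 1).IsStrictlyUltrametric where
  isSymm := IsSymm.ext fun i j => by simp [hA.isSymm.apply i j]
  nonneg i j := by
    obtain rfl | hij := eq_or_ne i j
    · simpa using (ht' i).le
    · simpa using ht i j hij
  min_le i j k := by simpa [min_sub_sub_right] using hA.min_le i j k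
  lt_diag i j hij := by simpa using hA.lt_diag i j hij
  diag_pos i := by simpa using ht' i

theorem apply_le_of_lt_of_apply_le (hA : A.IsStrictlyUltrametric) {i j p : ι} {t : ℝ}
    (hi : t < A i p) (hj : A j p ≤ t) : A i j ≤ t := by
  by_contra! h
  have := hA.min_le j p i
  rw [hA.isSymm.apply i j, hA.isSymm.apply i p] at this
  exact (lt_min h hi).not_ge (this.trans hj)

theorem isSymmPotential [Fintype ι] [DecidableEq ι] (hA : A.IsStrictlyUltrametric) :
    A.IsSymmPotential := by
  revert A
  refine Fintype.induction_subsingleton_or_nontrivial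
    (P := fun ι _ => ∀ [DecidableEq ι] {A : Matrix ι ι ℝ},
      A.IsStrictlyUltrametric → A.IsSymmPotential)
    ι ?_ ?_
  · intro ι _ _ _ A hA
    have : A = diagonal fun i => A i i := by
      ext i j
      obtain rfl := Subsingleton.elim i j
      simp
    rw [this]
    exact isSymmPotential_diagonal hA.diag_pos
  · intro ι _ _ ih _ A hA
    obtain ⟨p₀, q₀, hpq₀⟩ := exists_pair_ne ι
    obtain ⟨⟨p, q⟩, -, hmin⟩ := Finset.univ.offDiag.exists_min_image (fun x => A x.1 x.2)
      ⟨(p₀, q₀), by simpa using hpq₀⟩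
    set t := A p q
    have hle : ∀ i j, i ≠ j → t ≤ A i j := fun i j hij => hmin (i, j) (by simpa using hij)
    have hlt : ∀ i, t < A i i := fun i => by
      obtain ⟨j, hj⟩ := exists_ne i
      exact (hle i j hj.symm).trans_lt (hA.lt_diag i j hj.symm)
    let P : ι → Prop := fun i => t < A i p
    have hp : P p := hlt p
    have hq : ¬P q := by simp [P, t, hA.isSymm.apply q p]
    have hD := hA.sub_smul_vecMulVec_one hle hlt
    have hcross : ∀ i j, P i → ¬P j → A i j = t := fun i j hi hj =>
      (hA.apply_le_of_lt_of_apply_le hi (not_lt.mp hj)).antisymm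
        (hle i j fun h => hj (h ▸ hi))
    have hDpot : (A - t • vecMulVec 1 1).IsSymmPotential := by
      refine .of_toSquareBlockProp P (fun i j hi hj => ?_)
        (ih _ (Fintype.card_subtype_lt hq) (hD.submatrix Subtype.val_injective))
        (ih _ (Fintype.card_subtype_lt (not_not.mpr hp)) (hD.submatrix Subtype.val_injective))
      exact ⟨by simp [hcross i j hi hj], by simp [hA.isSymm.apply i j, hcross i j hi hj]⟩
    simpa only [sub_add_cancel] using
      hDpot.add_smul_vecMulVec_one (show 0 ≤ t from hA.nonneg p q)

end IsStrictlyUltrametric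

end Matrix

/-- Ultrametric matrices are positive definite and their inverses have
nonpositive off-diagonal entries. -/
theorem ultrametric_matrix_posdef (χ : ℕ) (A : Matrix (Fin χ) (Fin χ) ℝ)
    (hsymm : A.IsSymm) (hdiag : ∀ i, A i i = 1)
    (hoff : ∀ i j, i ≠ j → 0 ≤ A i j ∧ A i j < 1)
    (hultra : ∀ i j k, min (A i k) (A j k) ≤ A i j) :
    A.PosDef ∧ ∀ i j, i ≠ j → A⁻¹ i j ≤ 0 := by
  have hA : A.IsStrictlyUltrametric :=
    { isSymm := hsymm
      nonneg := fun i j => by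
        obtain rfl | hij := eq_or_ne i j
        · simp [hdiag]
        · exact (hoff i j hij).1
      min_le := hultra
      lt_diag := fun i j hij => hdiag i ▸ (hoff i j hij).2
      diag_pos := fun i => by simp [hdiag] }
  exact ⟨hA.isSymmPotential.posDef, hA.isSymmPotential.inv_apply_nonpos⟩
end

section
/- Let G be a positive definite real χ×χ matrix such that G is a convex combination G = Σ_σ p_σ G_σ of matrices G_σ each satisfying: G_σ is positive definite, 0 ≤ (G_σ)_{ij} ≤ 1 with (G_σ)_{ii} = 1, and (G_σ⁻¹)_{ij} ≤ 0 for i ≠ j. Then eᵀ G⁻¹ e ≤ χ, where e is the all-ones vector. -/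
/-!
The quadratic form `v ↦ vᵀ A⁻¹ v` of a positive definite `A` is the supremum over `x` of
`2 xᵀv - xᵀ A x`, attained at `x = A⁻¹ v`. Being a supremum of functions affine in `A`, it is
convex in `A`, so `eᵀ G⁻¹ e` is at most the corresponding mixture of the `eᵀ G_σ⁻¹ e`.
Each of these is at most `χ`: the `i`-th row sum of `G_σ⁻¹` is at most
`∑ⱼ (G_σ⁻¹)ᵢⱼ (G_σ)ⱼᵢ = 1`, because the off-diagonal entries of `G_σ⁻¹` are nonpositive and
those of `G_σ` are at most one.
-/

open Matrix

namespace Matrix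

variable {n : Type*} [Fintype n]

theorem sum_sum_apply_eq_one_dotProduct_mulVec_one (M : Matrix n n ℝ) :
    ∑ i, ∑ j, M i j = 1 ⬝ᵥ M *ᵥ 1 := by
  simp [mulVec, dotProduct]

variable [DecidableEq n]

/-- At `x = A⁻¹ v` the bound of `PosDef.two_mul_dotProduct_sub_le_dotProduct_inv_mulVec` is an
equality; for singular `A` both sides vanish since `A⁻¹ = 0`. -/
theorem dotProduct_inv_mulVec_eq (A : Matrix n n ℝ) (v : n → ℝ) :
    v ⬝ᵥ A⁻¹ *ᵥ v = 2 * (A⁻¹ *ᵥ v ⬝ᵥ v) - A⁻¹ *ᵥ v ⬝ᵥ A *ᵥ A⁻¹ *ᵥ v := by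
  by_cases hA : IsUnit A.det
  · rw [mulVec_mulVec, mul_nonsing_inv A hA, one_mulVec, dotProduct_comm v]
    ring
  · simp [nonsing_inv_apply_not_isUnit A hA]

theorem PosDef.two_mul_dotProduct_sub_le_dotProduct_inv_mulVec {A : Matrix n n ℝ}
    (hA : A.PosDef) (x v : n → ℝ) :
    2 * (x ⬝ᵥ v) - x ⬝ᵥ A *ᵥ x ≤ v ⬝ᵥ A⁻¹ *ᵥ v := by
  have hAinv : A *ᵥ A⁻¹ *ᵥ v = v := by
    rw [mulVec_mulVec, mul_nonsing_inv A hA.det_pos.ne'.isUnit, one_mulVec]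
  have hsymm : Aᵀ = A := hA.isHermitian
  have hcross : A⁻¹ *ᵥ v ⬝ᵥ A *ᵥ x = x ⬝ᵥ v := by
    rw [dotProduct_mulVec, ← mulVec_transpose, hsymm, hAinv, dotProduct_comm]
  have hsq : 0 ≤ (x - A⁻¹ *ᵥ v) ⬝ᵥ A *ᵥ (x - A⁻¹ *ᵥ v) := by
    simpa using hA.posSemidef.dotProduct_mulVec_nonneg (x - A⁻¹ *ᵥ v)
  rw [mulVec_sub, hAinv, sub_dotProduct, dotProduct_sub, dotProduct_sub, hcross,
    dotProduct_comm (A⁻¹ *ᵥ v)] at hsq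
  linarith

theorem dotProduct_inv_mulVec_sum_smul_le {ι : Type*} [Fintype ι] {p : ι → ℝ}
    (hp : ∀ σ, 0 ≤ p σ) (hp1 : ∑ σ, p σ = 1) {A : ι → Matrix n n ℝ}
    (hA : ∀ σ, (A σ).PosDef) (v : n → ℝ) :
    v ⬝ᵥ (∑ σ, p σ • A σ)⁻¹ *ᵥ v ≤ ∑ σ, p σ * (v ⬝ᵥ (A σ)⁻¹ *ᵥ v) := by
  set x := (∑ σ, p σ • A σ)⁻¹ *ᵥ v
  have hmix : 2 * (x ⬝ᵥ v) - x ⬝ᵥ (∑ σ, p σ • A σ) *ᵥ x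
      = ∑ σ, p σ * (2 * (x ⬝ᵥ v) - x ⬝ᵥ A σ *ᵥ x) := by
    simp only [sum_mulVec, smul_mulVec, dotProduct_sum, dotProduct_smul, smul_eq_mul, mul_sub,
      Finset.sum_sub_distrib, ← Finset.sum_mul, hp1, one_mul]
  calc v ⬝ᵥ (∑ σ, p σ • A σ)⁻¹ *ᵥ v
      = ∑ σ, p σ * (2 * (x ⬝ᵥ v) - x ⬝ᵥ A σ *ᵥ x) := by
        rw [dotProduct_inv_mulVec_eq, hmix]
    _ ≤ ∑ σ, p σ * (v ⬝ᵥ (A σ)⁻¹ *ᵥ v) := by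
        gcongr with σ
        · exact hp σ
        · exact (hA σ).two_mul_dotProduct_sub_le_dotProduct_inv_mulVec x v

theorem sum_inv_apply_le_one {A : Matrix n n ℝ} (hA : IsUnit A.det) (hle : ∀ i j, A i j ≤ 1)
    (hdiag : ∀ i, A i i = 1) (hinv_nonpos : ∀ i j, i ≠ j → A⁻¹ i j ≤ 0) (i : n) :
    ∑ j, A⁻¹ i j ≤ 1 := by
  calc ∑ j, A⁻¹ i j ≤ ∑ j, A⁻¹ i j * A j i := by
        refine Finset.sum_le_sum fun j _ => ?_
        rcases eq_or_ne i j with rfl | hij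
        · simp [hdiag]
        · nlinarith [hinv_nonpos i j hij, hle j i]
    _ = (A⁻¹ * A) i i := (mul_apply ..).symm
    _ = 1 := by simp [nonsing_inv_mul A hA]

theorem sum_sum_inv_apply_le_card {A : Matrix n n ℝ} (hA : IsUnit A.det)
    (hle : ∀ i j, A i j ≤ 1) (hdiag : ∀ i, A i i = 1)
    (hinv_nonpos : ∀ i j, i ≠ j → A⁻¹ i j ≤ 0) :
    ∑ i, ∑ j, A⁻¹ i j ≤ Fintype.card n := by
  calc ∑ i, ∑ j, A⁻¹ i j ≤ ∑ _i : n, (1 : ℝ) :=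
        Finset.sum_le_sum fun i _ => sum_inv_apply_le_one hA hle hdiag hinv_nonpos i
    _ = Fintype.card n := by simp

end Matrix

theorem convex_mixture_inverse_bound_general {ι : Type*} [Fintype ι] (χ : ℕ)
    (p : ι → ℝ) (hp : ∀ σ, 0 ≤ p σ) (hp1 : ∑ σ, p σ = 1)
    (Gm : ι → Matrix (Fin χ) (Fin χ) ℝ)
    (hpd : ∀ σ, (Gm σ).PosDef)
    (hentry : ∀ σ i j, 0 ≤ Gm σ i j ∧ Gm σ i j ≤ 1)
    (hdiag : ∀ σ i, Gm σ i i = 1)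
    (hinvoff : ∀ σ, ∀ i j, i ≠ j → (Gm σ)⁻¹ i j ≤ 0)
    (G : Matrix (Fin χ) (Fin χ) ℝ)
    (hmix : G = ∑ σ, p σ • Gm σ) :
    ∑ i, ∑ j, G⁻¹ i j ≤ (χ : ℝ) := by
  have hbound : ∀ σ, 1 ⬝ᵥ (Gm σ)⁻¹ *ᵥ 1 ≤ (χ : ℝ) := fun σ => by
    rw [← sum_sum_apply_eq_one_dotProduct_mulVec_one]
    simpa using sum_sum_inv_apply_le_card (hpd σ).det_pos.ne'.isUnit
      (fun i j => (hentry σ i j).2) (hdiag σ) (hinvoff σ)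
  calc ∑ i, ∑ j, G⁻¹ i j = 1 ⬝ᵥ G⁻¹ *ᵥ 1 := sum_sum_apply_eq_one_dotProduct_mulVec_one _
    _ ≤ ∑ σ, p σ * (1 ⬝ᵥ (Gm σ)⁻¹ *ᵥ 1) := hmix ▸ dotProduct_inv_mulVec_sum_smul_le hp hp1 hpd 1
    _ ≤ ∑ σ, p σ * (χ : ℝ) := by gcongr with σ; exacts [hp σ, hbound σ]
    _ = χ := by rw [← Finset.sum_mul, hp1, one_mul]

/-- If a positive definite matrix `G` is a convex combination of positive definite
matrices with entries in `[0,1]`, unit diagonal, and inverse with nonpositive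
off-diagonal entries, then `eᵀ G⁻¹ e ≤ χ`. -/
theorem convex_mixture_inverse_bound {ι : Type*} [Fintype ι] (χ : ℕ)
    (p : ι → ℝ) (hp : ∀ σ, 0 ≤ p σ) (hp1 : ∑ σ, p σ = 1)
    (Gm : ι → Matrix (Fin χ) (Fin χ) ℝ)
    (hpd : ∀ σ, (Gm σ).PosDef)
    (hentry : ∀ σ i j, 0 ≤ Gm σ i j ∧ Gm σ i j ≤ 1)
    (hdiag : ∀ σ i, Gm σ i i = 1)
    (hinvoff : ∀ σ, ∀ i j, i ≠ j → (Gm σ)⁻¹ i j ≤ 0)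
    (G : Matrix (Fin χ) (Fin χ) ℝ) (hG : G.PosDef)
    (hmix : G = ∑ σ, p σ • Gm σ) :
    ∑ i, ∑ j, G⁻¹ i j ≤ (χ : ℝ) :=
  convex_mixture_inverse_bound_general χ p hp hp1 Gm hpd hentry hdiag hinvoff G hmix
end

section
/- Fix 0 < t < 1, integers n ≥ h ≥ 0, and let q_w = C(n,w) t^w (1−t)^{n−w} be the binomial distribution on w ∈ {0,…,n}. Then (1/n!) Σ_{σ∈S_n} Σ_{w ≥ d(0ⁿ, σ(1^h 0^{n−h}))} q_w = t^h, where d is the distance d(x,y) = min{ j : x_i = y_i for all i > j } and σ(x) permutes the bits of x. -/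
/-!
The word `σ(1^h 0^{n-h})` is at distance `≤ w` from `0ⁿ` exactly when `σ` maps the first `h`
positions into the first `w`. Since `S_n` acts transitively on injections `Fin h ↪ Fin n`, every
injection is the restriction of equally many permutations, so this happens for
`n! · (w)_h / (n)_h` permutations, where `(m)_h` is the falling factorial. The claim then
reduces to the `h`-th factorial moment of the binomial distribution,
`∑_w (w)_h C(n,w) t^w (1-t)^(n-w) = (n)_h t^h`.
-/

open scoped BigOperators

/-- `bitDist x y` is the smallest `j ≥ 0` such that the bits of `x` and `y`
agree at all (0-based) positions `i` with `i ≥ j` (1-based positions `i > j`). -/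
noncomputable def bitDist {n : ℕ} (x y : Fin n → Bool) : ℕ :=
  sInf { j : ℕ | ∀ i : Fin n, j ≤ (i : ℕ) → x i = y i }

open Finset

theorem bitDist_le_iff {n w : ℕ} {x y : Fin n → Bool} :
    bitDist x y ≤ w ↔ ∀ i : Fin n, w ≤ (i : ℕ) → x i = y i := by
  have hn : n ∈ {j : ℕ | ∀ i : Fin n, j ≤ (i : ℕ) → x i = y i} :=
    fun i hi => absurd i.isLt (by omega)
  exact ⟨fun hw i hi => Nat.sInf_mem ⟨n, hn⟩ i (hw.trans hi), fun hw => Nat.sInf_le hw⟩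

theorem bitDist_false_le_iff {n w : ℕ} {y : Fin n → Bool} :
    bitDist (fun _ => false) y ≤ w ↔ ∀ i : Fin n, y i = true → (i : ℕ) < w := by
  rw [bitDist_le_iff]
  refine forall_congr' fun i => ?_
  cases y i <;> simp

theorem bitDist_false_perm_prefix_le_iff {n h w : ℕ} (hhn : h ≤ n) (σ : Equiv.Perm (Fin n)) :
    bitDist (fun _ => false) (fun i => decide (((σ⁻¹ i : Fin n) : ℕ) < h)) ≤ w ↔
      ∀ k, σ (Fin.castLEEmb hhn k) ∈ ({i | (i : ℕ) < w} : Finset (Fin n)) := by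
  simp only [bitDist_false_le_iff, decide_eq_true_eq, mem_filter, mem_univ, true_and,
    Fin.coe_castLEEmb]
  exact ⟨fun H k => H _ (by simp), fun H i hi => by simpa using H ⟨_, hi⟩⟩

theorem MulAction.card_nsmul_sum_smul {G X M : Type*} [Group G] [Fintype G] [MulAction G X]
    [Fintype X] [MulAction.IsPretransitive G X] [AddCommMonoid M] (f : X → M) (x₀ : X) :
    Fintype.card X • ∑ g : G, f (g • x₀) = Fintype.card G • ∑ x, f x := by
  have hx : ∀ x : X, ∑ g : G, f (g • x) = ∑ g : G, f (g • x₀) := by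
    intro x
    obtain ⟨τ, rfl⟩ := MulAction.exists_smul_eq G x₀ x
    simp_rw [smul_smul]
    exact Fintype.sum_equiv (Equiv.mulRight τ) _ _ fun _ => rfl
  calc Fintype.card X • ∑ g : G, f (g • x₀)
      = ∑ x : X, ∑ g : G, f (g • x) := by simp [hx]
    _ = ∑ g : G, ∑ x : X, f (g • x) := Finset.sum_comm
    _ = ∑ g : G, ∑ x : X, f x :=
        sum_congr rfl fun g _ => Fintype.sum_equiv (MulAction.toPerm g) _ _ fun _ => rfl
    _ = Fintype.card G • ∑ x, f x := by simp

theorem Equiv.Perm.card_filter_mapsTo_mul_descFactorial {ι α : Type*} [Fintype ι] [Fintype α]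
    [DecidableEq α] (x₀ : ι ↪ α) (s : Finset α) :
    #{σ : Equiv.Perm α | ∀ i, σ (x₀ i) ∈ s} *
        (Fintype.card α).descFactorial (Fintype.card ι) =
      (Fintype.card α).factorial * (#s).descFactorial (Fintype.card ι) := by
  have : MulAction.IsPretransitive (Equiv.Perm α) (ι ↪ α) := ⟨exists_smul_eq_embedding⟩
  have hs : #{f : ι ↪ α | ∀ i, f i ∈ s} = (#s).descFactorial (Fintype.card ι) := by
    rw [← Fintype.card_subtype, Fintype.card_congr
      ((Equiv.subtypeEquivRight fun f => by simp).trans (Equiv.codRestrict ι (s : Set α)))]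
    simp
  have := MulAction.card_nsmul_sum_smul (G := Equiv.Perm α)
    (fun f : ι ↪ α => if ∀ i, f i ∈ s then 1 else 0) x₀
  simp only [Function.Embedding.smul_apply, smul_eq_mul, ← card_filter,
    Fintype.card_perm, Fintype.card_embedding_eq, hs] at this
  rwa [mul_comm, card_filter]

theorem card_filter_bitDist_le_mul_descFactorial {n h w : ℕ} (hhn : h ≤ n) (hw : w ≤ n) :
    #{σ : Equiv.Perm (Fin n) |
        bitDist (fun _ => false) (fun i => decide (((σ⁻¹ i : Fin n) : ℕ) < h)) ≤ w} *
      n.descFactorial h = n.factorial * w.descFactorial h := by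
  have := Equiv.Perm.card_filter_mapsTo_mul_descFactorial (Fin.castLEEmb hhn)
    {i : Fin n | (i : ℕ) < w}
  rw [Fintype.card_fin, Fintype.card_fin, Fin.card_filter_val_lt, min_eq_right hw] at this
  rw [filter_congr fun σ _ => bitDist_false_perm_prefix_le_iff hhn σ, ← this]
  congr

theorem sum_descFactorial_mul_choose_mul_pow {R : Type*} [CommSemiring R] (x y : R) (n h : ℕ) :
    ∑ w ∈ range (n + 1), (w.descFactorial h : R) * (n.choose w * x ^ w * y ^ (n - w)) =
      n.descFactorial h * x ^ h * (x + y) ^ (n - h) := by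
  rcases lt_or_ge n h with hnh | hhn
  · rw [Nat.descFactorial_eq_zero_iff_lt.2 hnh, Nat.cast_zero, zero_mul, zero_mul]
    refine sum_eq_zero fun w hw => ?_
    rw [Nat.descFactorial_eq_zero_iff_lt.2 (by grind), Nat.cast_zero, zero_mul]
  have hchoose : ∀ k, (h + k).descFactorial h * n.choose (h + k) =
      n.descFactorial h * (n - h).choose k := by
    intro k
    rw [Nat.descFactorial_eq_factorial_mul_choose, Nat.descFactorial_eq_factorial_mul_choose,
      mul_assoc, mul_assoc, mul_comm ((h + k).choose h), Nat.choose_mul (Nat.le_add_right h k),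
      Nat.add_sub_cancel_left]
  have hlow : ∑ w ∈ range h, (w.descFactorial h : R) * (n.choose w * x ^ w * y ^ (n - w)) = 0 :=
    sum_eq_zero fun w hw => by
      rw [Nat.descFactorial_eq_zero_iff_lt.2 (mem_range.1 hw), Nat.cast_zero, zero_mul]
  rw [show n + 1 = h + (n - h + 1) by omega, sum_range_add, hlow, zero_add, add_pow, mul_sum]
  refine sum_congr rfl fun k _ => ?_
  rw [show n - (h + k) = n - h - k by omega, pow_add]
  calc _ = (((h + k).descFactorial h * n.choose (h + k) : ℕ) : R) *
        (x ^ h * x ^ k * y ^ (n - h - k)) := by push_cast; ring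
    _ = _ := by rw [hchoose]; push_cast; ring

theorem perm_binomial_identity_general (n h : ℕ) (hhn : h ≤ n)
    (t : ℝ) :
    (n.factorial : ℝ)⁻¹ *
      ∑ σ : Equiv.Perm (Fin n),
        ∑ w ∈ Finset.Icc
            (bitDist (fun _ => false) (fun i => decide (((σ⁻¹ i : Fin n) : ℕ) < h))) n,
          (n.choose w : ℝ) * t ^ w * (1 - t) ^ (n - w)
      = t ^ h := by
  set q : ℕ → ℝ := fun w => (n.choose w : ℝ) * t ^ w * (1 - t) ^ (n - w)
  set d : Equiv.Perm (Fin n) → ℕ :=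
    fun σ => bitDist (fun _ => false) (fun i => decide (((σ⁻¹ i : Fin n) : ℕ) < h))
  have hswap :
      ∑ σ, ∑ w ∈ Icc (d σ) n, q w = ∑ w ∈ range (n + 1), #{σ | d σ ≤ w} * q w := by
    rw [sum_comm' (t' := range (n + 1)) (s' := fun w => {σ | d σ ≤ w})]
    · simp only [sum_const, nsmul_eq_mul]
    · intro σ w
      simp only [mem_univ, mem_Icc, true_and, mem_filter, mem_range, Order.lt_add_one_iff]
  have hdesc : (n.descFactorial h : ℝ) ≠ 0 := mod_cast (Nat.descFactorial_pos.2 hhn).ne'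
  calc _ = (n.factorial : ℝ)⁻¹ * ∑ w ∈ range (n + 1), #{σ | d σ ≤ w} * q w := by
        rw [hswap]
    _ = (n.descFactorial h : ℝ)⁻¹ * ∑ w ∈ range (n + 1), w.descFactorial h * q w := by
        rw [mul_sum, mul_sum]
        refine sum_congr rfl fun w hw => ?_
        have hcount :
            (#{σ | d σ ≤ w} : ℝ) * n.descFactorial h = n.factorial * w.descFactorial h :=
          mod_cast card_filter_bitDist_le_mul_descFactorial hhn
            (Nat.lt_succ_iff.1 (mem_range.1 hw))
        field_simp
        linear_combination q w * hcount
    _ = t ^ h := by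
        rw [sum_descFactorial_mul_choose_mul_pow]
        simp [hdesc]

/-- Averaging the ultrametric Gram matrix entries over all permutations with
binomial weights `q_w = C(n,w) t^w (1−t)^{n−w}` reproduces `t^h`. -/
theorem perm_binomial_identity (n h : ℕ) (hhn : h ≤ n)
    (t : ℝ) (ht0 : 0 < t) (ht1 : t < 1) :
    (n.factorial : ℝ)⁻¹ *
      ∑ σ : Equiv.Perm (Fin n),
        ∑ w ∈ Finset.Icc
            (bitDist (fun _ => false) (fun i => decide (((σ⁻¹ i : Fin n) : ℕ) < h))) n,
          (n.choose w : ℝ) * t ^ w * (1 - t) ^ (n - w)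
      = t ^ h :=
  perm_binomial_identity_general n h hhn t
end

section
/- Let B be an n×n integer symmetric matrix with off-diagonal entries in {0,1} and diagonal entries in {0,1,2,3}, and define Z(B) = Σ_{x∈{0,1}ⁿ} i^{xBxᵀ}, where i = √(−1) and xBxᵀ is computed over the integers. Then Z(B) = α·2^p + i·β·2^q for some integers p, q ≥ 0 and α, β ∈ {0, 1, −1}. -/
open scoped BigOperators
open Finset

namespace ExpSumAux

noncomputable section

def c (b : Bool) : ℤ := if b then 1 else 0

lemma badd (a b : Bool) : a + b = xor a b := rfl

lemma c_add (a b : Bool) : c (a + b) = c a + c b - 2 * c a * c b := by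
  cases a <;> cases b <;> simp [c, badd]

lemma zpow_I_congr {a b : ℤ} (h : a % 4 = b % 4) : Complex.I ^ a = Complex.I ^ b := by
  obtain ⟨k, hk⟩ : (4:ℤ) ∣ a - b := by omega
  have ha : a = b + 4 * k := by omega
  have h4 : Complex.I ^ (4:ℤ) = 1 := by
    rw [show (4:ℤ) = ((4:ℕ):ℤ) by norm_num, zpow_natCast]
    norm_num [pow_succ, Complex.I_mul_I]
  rw [ha, zpow_add₀ Complex.I_ne_zero, zpow_mul, h4, one_zpow, mul_one]

lemma zpow_I_sum {ι : Type*} (s : Finset ι) (f : ι → ℤ) :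
    Complex.I ^ (∑ i ∈ s, f i) = ∏ i ∈ s, Complex.I ^ f i := by
  classical
  induction s using Finset.cons_induction with
  | empty => simp
  | cons a s ha ih =>
    rw [Finset.sum_cons, Finset.prod_cons, zpow_add₀ Complex.I_ne_zero, ih]

def gre (k : ℤ) : ℤ := if k % 4 = 0 then 1 else if k % 4 = 2 then -1 else 0

def gim (k : ℤ) : ℤ := if k % 4 = 1 then 1 else if k % 4 = 3 then -1 else 0

lemma I_zpow_eq (k : ℤ) : Complex.I ^ k = (gre k : ℂ) + (gim k : ℂ) * Complex.I := by
  have h : k % 4 = 0 ∨ k % 4 = 1 ∨ k % 4 = 2 ∨ k % 4 = 3 := by omega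
  have h2 : Complex.I ^ (2:ℤ) = -1 := by
    rw [show (2:ℤ) = ((2:ℕ):ℤ) by norm_num, zpow_natCast, Complex.I_sq]
  have h3 : Complex.I ^ (3:ℤ) = -Complex.I := by
    rw [show (3:ℤ) = ((3:ℕ):ℤ) by norm_num, zpow_natCast]
    simp [pow_succ, Complex.I_sq]
  rcases h with h | h | h | h
  · rw [zpow_I_congr (show k % 4 = (0:ℤ) % 4 by omega), zpow_zero]
    simp [gre, gim, h]
  · rw [zpow_I_congr (show k % 4 = (1:ℤ) % 4 by omega), zpow_one]
    simp [gre, gim, h]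
  · rw [zpow_I_congr (show k % 4 = (2:ℤ) % 4 by omega), h2]
    simp [gre, gim, h]
  · rw [zpow_I_congr (show k % 4 = (3:ℤ) % 4 by omega), h3]
    simp [gre, gim, h]

lemma conj_I_zpow (k : ℤ) : (starRingEnd ℂ) (Complex.I ^ k) = Complex.I ^ (-k) := by
  rw [map_zpow₀, Complex.conj_I, ← Complex.inv_I, inv_zpow, ← zpow_neg]

variable {n : ℕ} (B : Matrix (Fin n) (Fin n) ℤ)

def Qf (x : Fin n → Bool) : ℤ := ∑ i, ∑ j, c (x i) * B i j * c (x j)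

def Bf (y z : Fin n → Bool) : ℤ := ∑ i, ∑ j, c (y i) * B i j * c (z j)

def colE (z : Fin n → Bool) (i : Fin n) : ℤ := ∑ j, B i j * c (z j)

def Rf (y z : Fin n → Bool) : ℤ :=
  ∑ i, ∑ j, B i j * (c (y i) * c (z i) * (c (y j) + c (z j) - c (y j) * c (z j)))

lemma dsum_congr {f g : Fin n → Fin n → ℤ} (h : ∀ i j, f i j = g i j) :
    ∑ i, ∑ j, f i j = ∑ i, ∑ j, g i j :=
  Finset.sum_congr rfl fun i _ => Finset.sum_congr rfl fun j _ => h i j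

lemma swap_gen (hB : B.IsSymm) (f g : Fin n → ℤ) :
    ∑ i, ∑ j, B i j * (f i * g j) = ∑ i, ∑ j, B i j * (f j * g i) := by
  rw [Finset.sum_comm]
  exact Finset.sum_congr rfl fun i _ => Finset.sum_congr rfl fun j _ => by
    rw [show B j i = B i j from (hB.apply j i).symm]

lemma Bf_sum (y z : Fin n → Bool) : Bf B y z = ∑ i, c (y i) * colE B z i := by
  simp only [Bf, colE, Finset.mul_sum, mul_assoc]

lemma Qf_add (hB : B.IsSymm) (y z : Fin n → Bool) :
    Qf B (y + z) = Qf B y + Qf B z + 2 * Bf B y z - 4 * Rf B y z := by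
  have e1 : Qf B (y + z)
      = ((Qf B y + Qf B z + Bf B y z + ∑ i, ∑ j, B i j * (c (z i) * c (y j)))
        - (Rf B y z + ∑ i, ∑ j, B i j *
            ((c (y i) * c (z i)) * (c (y j) + c (z j) - c (y j) * c (z j))))
        - (∑ i, ∑ j, B i j *
            ((c (y i) + c (z i) - c (y i) * c (z i)) * (c (y j) * c (z j)))
          + ∑ i, ∑ j, B i j *
            ((c (y i) + c (z i) - c (y i) * c (z i)) * (c (y j) * c (z j))))) := by
    simp only [Qf, Bf, Rf, Pi.add_apply, c_add]
    simp only [← Finset.sum_add_distrib, ← Finset.sum_sub_distrib]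
    exact dsum_congr fun i j => by ring
  have e2 : ∑ i, ∑ j, B i j * (c (z i) * c (y j)) = Bf B y z := by
    rw [swap_gen B hB (fun i => c (z i)) (fun j => c (y j))]
    simp only [Bf]
    exact dsum_congr fun i j => by ring
  have e3 : ∑ i, ∑ j, B i j *
      ((c (y i) + c (z i) - c (y i) * c (z i)) * (c (y j) * c (z j))) = Rf B y z := by
    rw [swap_gen B hB (fun i => c (y i) + c (z i) - c (y i) * c (z i))
      (fun j => c (y j) * c (z j))]
    simp only [Rf]
    exact dsum_congr fun i j => by ring
  have e4 : ∑ i, ∑ j, B i j *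
      ((c (y i) * c (z i)) * (c (y j) + c (z j) - c (y j) * c (z j))) = Rf B y z := by
    simp only [Rf]
  rw [e1, e2, e3, e4]
  ring

lemma colE_add (y z : Fin n → Bool) (i : Fin n) :
    colE B (y + z) i = colE B y i + colE B z i - 2 * ∑ j, B i j * (c (y j) * c (z j)) := by
  simp only [colE, Pi.add_apply, c_add, Finset.mul_sum,
    ← Finset.sum_add_distrib, ← Finset.sum_sub_distrib]
  exact Finset.sum_congr rfl fun j _ => by ring

open Classical in
def Kfin : Finset (Fin n → Bool) := univ.filter (fun z => ∀ i, (2:ℤ) ∣ colE B z i)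

lemma inner_sum (z : Fin n → Bool) : ∑ y : Fin n → Bool, Complex.I ^ (2 * Bf B y z)
    = if ∀ i, (2:ℤ) ∣ colE B z i then ((2:ℂ)^n) else 0 := by
  classical
  have step1 : ∀ y, Complex.I ^ (2 * Bf B y z)
      = ∏ i, Complex.I ^ (2 * (c (y i) * colE B z i)) := by
    intro y
    rw [Bf_sum, Finset.mul_sum, zpow_I_sum]
  rw [Finset.sum_congr rfl fun y _ => step1 y, ← Fintype.prod_sum (fun (i : Fin n) (b : Bool) => Complex.I ^ (2 * (c b * colE B z i)))]
  have hfac : ∀ i, (∑ b : Bool, Complex.I ^ (2 * (c b * colE B z i)))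
      = if (2:ℤ) ∣ colE B z i then (2:ℂ) else 0 := by
    intro i
    rw [Fintype.sum_bool,
      show (2 * (c true * colE B z i)) = 2 * colE B z i by simp [c],
      show (2 * (c false * colE B z i)) = 0 by simp [c], zpow_zero]
    by_cases h : (2:ℤ) ∣ colE B z i
    · obtain ⟨t, ht⟩ := h
      rw [zpow_I_congr (show (2 * colE B z i) % 4 = 0 % 4 by omega), zpow_zero, if_pos ⟨t, ht⟩]
      norm_num
    · obtain ⟨t, ht⟩ : ∃ t, colE B z i = 2*t+1 := ⟨colE B z i / 2, by omega⟩
      rw [zpow_I_congr (show (2 * colE B z i) % 4 = (2:ℤ) % 4 by omega), if_neg h,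
        show (2:ℤ) = ((2:ℕ):ℤ) by norm_num, zpow_natCast, Complex.I_sq]
      ring
  rw [Finset.prod_congr rfl fun i _ => hfac i]
  by_cases hall : ∀ i, (2:ℤ) ∣ colE B z i
  · rw [if_pos hall]
    rw [Finset.prod_congr rfl fun i _ => if_pos (hall i), Finset.prod_const]
    simp
  · obtain ⟨i0, hi0⟩ := not_forall.mp hall
    rw [if_neg hall]
    exact Finset.prod_eq_zero (Finset.mem_univ i0) (by simp [hi0])

def Za : ℤ := ∑ x : Fin n → Bool, gre (Qf B x)

def Zb : ℤ := ∑ x : Fin n → Bool, gim (Qf B x)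

lemma Z_eq : ∑ x : Fin n → Bool, Complex.I ^ Qf B x
    = (Za B : ℂ) + (Zb B : ℂ) * Complex.I := by
  simp only [Za, Zb]
  push_cast
  rw [Finset.sum_mul, ← Finset.sum_add_distrib]
  exact Finset.sum_congr rfl fun x _ => I_zpow_eq _

lemma key (hB : B.IsSymm) : (((Za B)^2 + (Zb B)^2 : ℤ) : ℂ)
    = 2 ^ n * ∑ z ∈ Kfin B, Complex.I ^ Qf B z := by
  classical
  have hconj : (starRingEnd ℂ) (∑ x : Fin n → Bool, Complex.I ^ Qf B x)
      = (Za B : ℂ) - (Zb B : ℂ) * Complex.I := by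
    rw [Z_eq]
    simp [map_add, map_mul, Complex.conj_I]
    ring
  calc (((Za B)^2 + (Zb B)^2 : ℤ) : ℂ)
      = (∑ x : Fin n → Bool, Complex.I ^ Qf B x) *
          (starRingEnd ℂ) (∑ x : Fin n → Bool, Complex.I ^ Qf B x) := by
        rw [hconj, Z_eq]
        push_cast
        linear_combination ((Zb B : ℂ)^2) * Complex.I_sq
    _ = ∑ y : Fin n → Bool, ∑ x : Fin n → Bool, Complex.I ^ (Qf B x - Qf B y) := by
        rw [map_sum]
        simp only [conj_I_zpow]
        rw [Finset.sum_mul_sum, Finset.sum_comm]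
        exact Finset.sum_congr rfl fun y _ => Finset.sum_congr rfl fun x _ => by
          rw [← zpow_add₀ Complex.I_ne_zero, sub_eq_add_neg]
    _ = ∑ y : Fin n → Bool, ∑ z : Fin n → Bool, Complex.I ^ (Qf B z + 2 * Bf B y z) := by
        refine Finset.sum_congr rfl fun y _ => ?_
        rw [← Equiv.sum_comp (Equiv.addLeft y)
          (fun x => Complex.I ^ (Qf B x - Qf B y))]
        refine Finset.sum_congr rfl fun z _ => ?_
        have h := Qf_add B hB y z
        have hz : (Equiv.addLeft y) z = y + z := rfl
        rw [hz]
        exact zpow_I_congr (by omega)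
    _ = ∑ z : Fin n → Bool, Complex.I ^ Qf B z * ∑ y : Fin n → Bool, Complex.I ^ (2 * Bf B y z) := by
        rw [Finset.sum_comm]
        refine Finset.sum_congr rfl fun z _ => ?_
        rw [Finset.mul_sum]
        exact Finset.sum_congr rfl fun y _ => (zpow_add₀ Complex.I_ne_zero _ _)
    _ = ∑ z : Fin n → Bool, Complex.I ^ Qf B z *
          (if ∀ i, (2:ℤ) ∣ colE B z i then ((2:ℂ)^n) else 0) := by
        exact Finset.sum_congr rfl fun z _ => by rw [inner_sum]
    _ = 2 ^ n * ∑ z ∈ Kfin B, Complex.I ^ Qf B z := by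
        rw [Finset.mul_sum]
        simp only [Kfin, Finset.sum_filter]
        exact Finset.sum_congr rfl fun z _ => by split <;> ring

def Ksub : AddSubgroup (Fin n → Bool) where
  carrier := {z | ∀ i, (2:ℤ) ∣ colE B z i}
  zero_mem' := by
    intro i
    simp [colE, show (c 0 : ℤ) = 0 from rfl]
  add_mem' := by
    intro y z hy hz i
    rw [colE_add]
    have h1 := hy i
    have h2 := hz i
    omega
  neg_mem' := by
    intro z hz
    simpa [show -z = z from rfl] using hz

lemma mem_Kfin_iff (z : Fin n → Bool) : z ∈ Kfin B ↔ ∀ i, (2:ℤ) ∣ colE B z i := by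
  classical
  simp [Kfin]

lemma add_mem_Kfin {z z0 : Fin n → Bool} (hz : z ∈ Kfin B) (hz0 : z0 ∈ Kfin B) :
    z + z0 ∈ Kfin B := by
  rw [mem_Kfin_iff] at *
  intro i
  rw [colE_add]
  have h1 := hz i
  have h2 := hz0 i
  omega

lemma card_Kfin : ∃ k : ℕ, (Kfin B).card = 2 ^ k := by
  classical
  have h1 : (Kfin B).card = Nat.card (Ksub B) := by
    rw [← Nat.card_eq_finsetCard]
    exact Nat.card_congr (Equiv.subtypeEquivRight (fun z => by
      rw [mem_Kfin_iff]; exact Iff.rfl))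
  have h2 : Nat.card (Ksub B) ∣ 2 ^ n := by
    have hd := AddSubgroup.card_addSubgroup_dvd_card (Ksub B)
    have hcard : Nat.card (Fin n → Bool) = 2 ^ n := by
      simp [Nat.card_eq_fintype_card]
    rwa [hcard] at hd
  obtain ⟨k, -, hk⟩ := (Nat.dvd_prime_pow Nat.prime_two).mp h2
  exact ⟨k, by rw [h1, hk]⟩

lemma S_cases (hB : B.IsSymm) : (∑ z ∈ Kfin B, Complex.I ^ Qf B z) = 0 ∨
    (∑ z ∈ Kfin B, Complex.I ^ Qf B z) = ((Kfin B).card : ℂ) := by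
  classical
  by_cases hall : ∀ z ∈ Kfin B, Qf B z % 4 = 0
  · right
    rw [Finset.sum_congr rfl fun z hz =>
      (zpow_I_congr (show Qf B z % 4 = (0:ℤ) % 4 by
        have := hall z hz; omega) ).trans (zpow_zero _)]
    simp
  · left
    push_neg at hall
    obtain ⟨z0, hz0K, hz0⟩ := hall
    have hz0mem : ∀ i, (2:ℤ) ∣ colE B z0 i := (mem_Kfin_iff B z0).mp hz0K
    have hself : ∀ z : Fin n → Bool, z + z0 + z0 = z := by
      intro z
      rw [add_assoc, show z0 + z0 = (0 : Fin n → Bool) from funext fun i => Bool.xor_self _, add_zero]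
    have hstep : (∑ z ∈ Kfin B, Complex.I ^ Qf B z) * Complex.I ^ Qf B z0
        = ∑ z ∈ Kfin B, Complex.I ^ Qf B z := by
      rw [Finset.sum_mul]
      have h1 : ∀ z ∈ Kfin B, Complex.I ^ Qf B z * Complex.I ^ Qf B z0
          = Complex.I ^ Qf B (z + z0) := by
        intro z hz
        rw [← zpow_add₀ Complex.I_ne_zero]
        refine zpow_I_congr ?_
        have h := Qf_add B hB z z0
        have h2 : (2:ℤ) ∣ Bf B z z0 := by
          rw [Bf_sum]
          exact Finset.dvd_sum fun i _ => Dvd.dvd.mul_left (hz0mem i) _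
        omega
      rw [Finset.sum_congr rfl h1]
      exact Finset.sum_nbij' (fun z => z + z0) (fun z => z + z0)
        (fun z hz => add_mem_Kfin B hz hz0K) (fun z hz => add_mem_Kfin B hz hz0K)
        (fun z _ => hself z) (fun z _ => hself z) (fun z _ => rfl)
    have hne : Complex.I ^ Qf B z0 ≠ 1 := by
      have h : Qf B z0 % 4 = 1 ∨ Qf B z0 % 4 = 2 ∨ Qf B z0 % 4 = 3 := by omega
      rcases h with h | h | h
      · rw [zpow_I_congr (show Qf B z0 % 4 = (1:ℤ) % 4 by omega), zpow_one]
        intro h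
        rw [Complex.ext_iff] at h
        simp at h
      · rw [zpow_I_congr (show Qf B z0 % 4 = (2:ℤ) % 4 by omega),
          show (2:ℤ) = ((2:ℕ):ℤ) by norm_num, zpow_natCast, Complex.I_sq]
        norm_num
      · rw [zpow_I_congr (show Qf B z0 % 4 = (3:ℤ) % 4 by omega),
          show (3:ℤ) = ((3:ℕ):ℤ) by norm_num, zpow_natCast]
        simp [pow_succ, Complex.I_sq, Complex.ext_iff]
    have hfac : (∑ z ∈ Kfin B, Complex.I ^ Qf B z) * (Complex.I ^ Qf B z0 - 1) = 0 := by
      linear_combination hstep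
    rcases mul_eq_zero.mp hfac with h | h
    · exact h
    · exact absurd (by linear_combination h) hne

lemma sq_add_sq_eq_pow_two : ∀ m : ℕ, ∀ a b : ℤ, a^2 + b^2 = 2^m →
    (a = 0 ∨ ∃ p : ℕ, a = 2^p ∨ a = -2^p) ∧ (b = 0 ∨ ∃ q : ℕ, b = 2^q ∨ b = -2^q) := by
  intro m
  induction m using Nat.strong_induction_on with
  | _ m ih =>
    intro a b hab
    by_cases h2 : 2 ≤ m
    · have h0 : (2:ℤ)^m = 4 * 2^(m-2) := by
        rw [show m = 2 + (m-2) by omega, pow_add]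
        ring_nf
        rw [show 2 + (m-2) - 2 = m - 2 by omega]
      have hev : Even a ∧ Even b := by
        rcases Int.even_or_odd a with ha | ha <;> rcases Int.even_or_odd b with hb | hb
        · exact ⟨ha, hb⟩
        · obtain ⟨s, hs⟩ := ha; obtain ⟨t, ht⟩ := hb
          exfalso
          have : (4:ℤ) ∣ 1 := ⟨2^(m-2) - s^2 - t^2 - t, by
            rw [hs, ht] at hab; linear_combination hab + h0⟩
          norm_num at this
        · obtain ⟨s, hs⟩ := ha; obtain ⟨t, ht⟩ := hb
          exfalso
          have : (4:ℤ) ∣ 1 := ⟨2^(m-2) - s^2 - s - t^2, by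
            rw [hs, ht] at hab; linear_combination hab + h0⟩
          norm_num at this
        · obtain ⟨s, hs⟩ := ha; obtain ⟨t, ht⟩ := hb
          exfalso
          have : (4:ℤ) ∣ 2 := ⟨2^(m-2) - s^2 - s - t^2 - t, by
            rw [hs, ht] at hab; linear_combination hab + h0⟩
          omega
      obtain ⟨⟨s, hs⟩, ⟨t, ht⟩⟩ := hev
      have hst : s^2 + t^2 = 2^(m-2) := by
        have h4 : (4:ℤ) * (s^2 + t^2) = 4 * 2^(m-2) := by
          rw [hs, ht] at hab; linear_combination hab + h0
        exact mul_left_cancel₀ (by norm_num) h4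
      obtain ⟨hA, hB⟩ := ih (m-2) (by omega) s t hst
      constructor
      · rcases hA with h | ⟨p, h | h⟩
        · left; omega
        · right; exact ⟨p+1, Or.inl (by rw [hs, h]; ring)⟩
        · right; exact ⟨p+1, Or.inr (by rw [hs, h]; ring)⟩
      · rcases hB with h | ⟨q, h | h⟩
        · left; omega
        · right; exact ⟨q+1, Or.inl (by rw [ht, h]; ring)⟩
        · right; exact ⟨q+1, Or.inr (by rw [ht, h]; ring)⟩
    · have hm2 : (2:ℤ)^m ≤ 2 := by
        interval_cases m <;> norm_num
      have hb2 : a^2 ≤ 2 ∧ b^2 ≤ 2 := by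
        constructor <;> nlinarith [sq_nonneg a, sq_nonneg b]
      have ha1 : 2*a ≤ 3 := by nlinarith [sq_nonneg (a-1), hb2.1]
      have ha2 : -3 ≤ 2*a := by nlinarith [sq_nonneg (a+1), hb2.1]
      have hbb1 : 2*b ≤ 3 := by nlinarith [sq_nonneg (b-1), hb2.2]
      have hbb2 : -3 ≤ 2*b := by nlinarith [sq_nonneg (b+1), hb2.2]
      have ha' : a = 0 ∨ a = 1 ∨ a = -1 := by omega
      have hb' : b = 0 ∨ b = 1 ∨ b = -1 := by omega
      constructor
      · rcases ha' with h | h | h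
        · exact Or.inl h
        · exact Or.inr ⟨0, Or.inl (by rw [h]; norm_num)⟩
        · exact Or.inr ⟨0, Or.inr (by rw [h]; norm_num)⟩
      · rcases hb' with h | h | h
        · exact Or.inl h
        · exact Or.inr ⟨0, Or.inl (by rw [h]; norm_num)⟩
        · exact Or.inr ⟨0, Or.inr (by rw [h]; norm_num)⟩

end

end ExpSumAux

open ExpSumAux in
/-- The exponential sum `Z(B) = Σ_{x∈{0,1}ⁿ} i^{xBxᵀ}` for a symmetric integer matrix
with off-diagonal entries in `{0,1}` and diagonal entries in `{0,1,2,3}` equals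
`α·2^p + i·β·2^q` with `α,β ∈ {0,1,−1}`. -/
theorem exponential_sum_form (n : ℕ) (B : Matrix (Fin n) (Fin n) ℤ) (hsymm : B.IsSymm)
    (hoff : ∀ i j, i ≠ j → B i j = 0 ∨ B i j = 1)
    (hdiag : ∀ i, B i i = 0 ∨ B i i = 1 ∨ B i i = 2 ∨ B i i = 3) :
    ∃ (p q : ℕ) (α β : ℤ), (α = 0 ∨ α = 1 ∨ α = -1) ∧ (β = 0 ∨ β = 1 ∨ β = -1) ∧
      ∑ x : Fin n → Bool,
          Complex.I ^ (∑ i, ∑ j, (if x i then 1 else 0 : ℤ) * B i j * (if x j then 1 else 0))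
        = (α : ℂ) * 2 ^ p + Complex.I * (β : ℂ) * 2 ^ q := by
  classical
  rcases S_cases B hsymm with hS | hS
  · have h0 : ((Za B)^2 + (Zb B)^2 : ℤ) = 0 := by
      have hk := key B hsymm
      rw [hS, mul_zero] at hk
      exact_mod_cast hk
    have ha : Za B = 0 := by nlinarith [sq_nonneg (Za B), sq_nonneg (Zb B)]
    have hb : Zb B = 0 := by nlinarith [sq_nonneg (Za B), sq_nonneg (Zb B)]
    refine ⟨0, 0, 0, 0, Or.inl rfl, Or.inl rfl, ?_⟩
    show (∑ x : Fin n → Bool, Complex.I ^ Qf B x) = _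
    rw [Z_eq, ha, hb]
    norm_num
  · obtain ⟨k, hk⟩ := card_Kfin B
    have h2 : ((Za B)^2 + (Zb B)^2 : ℤ) = 2^(n+k) := by
      have hkey := key B hsymm
      rw [hS, hk] at hkey
      have hc : (((Za B)^2 + (Zb B)^2 : ℤ) : ℂ) = ((2^(n+k) : ℤ) : ℂ) := by
        rw [hkey]
        push_cast
        rw [pow_add]
      exact_mod_cast hc
    obtain ⟨hA, hB'⟩ := sq_add_sq_eq_pow_two (n+k) (Za B) (Zb B) h2
    obtain ⟨p, α, hα, hZa⟩ : ∃ (p:ℕ) (α:ℤ), (α = 0 ∨ α = 1 ∨ α = -1) ∧ Za B = α * 2^p := by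
      rcases hA with h | ⟨p, h | h⟩
      · exact ⟨0, 0, Or.inl rfl, by rw [h]; ring⟩
      · exact ⟨p, 1, Or.inr (Or.inl rfl), by rw [h]; ring⟩
      · exact ⟨p, -1, Or.inr (Or.inr rfl), by rw [h]; ring⟩
    obtain ⟨q, β, hβ, hZb⟩ : ∃ (q:ℕ) (β:ℤ), (β = 0 ∨ β = 1 ∨ β = -1) ∧ Zb B = β * 2^q := by
      rcases hB' with h | ⟨q, h | h⟩
      · exact ⟨0, 0, Or.inl rfl, by rw [h]; ring⟩
      · exact ⟨q, 1, Or.inr (Or.inl rfl), by rw [h]; ring⟩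
      · exact ⟨q, -1, Or.inr (Or.inr rfl), by rw [h]; ring⟩
    refine ⟨p, q, α, β, hα, hβ, ?_⟩
    show (∑ x : Fin n → Bool, Complex.I ^ Qf B x) = _
    rw [Z_eq, hZa, hZb]
    push_cast
    ring
end

section
/- Let M_n be the set of symmetric n×n integer matrices with off-diagonal entries in {0,1} and diagonal entries in {0,1,2,3}. For A ∈ M_n define the equatorial state |φ_A⟩ = 2^{−n/2} Σ_{x∈{0,1}ⁿ} i^{xAxᵀ}|x⟩. Then E_A[|φ_A⟩⟨φ_A|] = 2^{−n}·I, where A is drawn uniformly from M_n; hence for any vector ψ ∈ ℂ^{2ⁿ}, E_A[2ⁿ|⟨φ_A|ψ⟩|²] = ‖ψ‖². -/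
open scoped BigOperators ComplexConjugate

/-- Data parametrizing the set `M_n` of symmetric `n×n` integer matrices with
off-diagonal entries in `{0,1}` and diagonal entries in `{0,1,2,3}`: a diagonal in
`Fin 4` and (via the strict upper triangle) off-diagonal bits.  Drawing the data
uniformly draws the corresponding matrix uniformly from `M_n`. -/
abbrev Mdata (n : ℕ) := (Fin n → Fin 4) × (Fin n → Fin n → Bool)

/-- The matrix in `M_n` corresponding to the data `D`. -/
def mdataMatrix {n : ℕ} (D : Mdata n) : Matrix (Fin n) (Fin n) ℤ :=
  Matrix.of fun i j =>
    if i = j then (D.1 i : ℤ) else (if D.2 (min i j) (max i j) then 1 else 0)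

/-- The equatorial state `|φ_A⟩ = 2^{−n/2} Σ_x i^{xAxᵀ} |x⟩` for `A = mdataMatrix D`. -/
noncomputable def equatorial {n : ℕ} (D : Mdata n) : (Fin n → Bool) → ℂ :=
  fun x => ((Real.sqrt (2 ^ n) : ℝ) : ℂ)⁻¹ *
    Complex.I ^ (∑ i, ∑ j,
      (if x i then 1 else 0 : ℤ) * mdataMatrix D i j * (if x j then 1 else 0))

/-!
For `x ∈ {0,1}ⁿ` the quadratic form splits as `xAxᵀ = Σᵢ Aᵢᵢ xᵢ + (off-diagonal part)`, since
`xᵢ² = xᵢ`. Hence `E[φ_A(x) conj φ_A(y)]` is `2⁻ⁿ` times an average of `i^(xAxᵀ - yAyᵀ)`, and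
averaging over the diagonal alone factors into a product over coordinates, in which every
coordinate with `xᵢ ≠ yᵢ` contributes the vanishing sum `Σ_{a<4} i^(±a)`. The second claim is
`E|⟨φ_A|ψ⟩|² = ⟨ψ| E[|φ_A⟩⟨φ_A|] |ψ⟩`.
-/

theorem zpow_finset_sum₀ {ι G₀ : Type*} [CommGroupWithZero G₀] {a : G₀} (ha : a ≠ 0)
    (s : Finset ι) (f : ι → ℤ) : a ^ (∑ i ∈ s, f i) = ∏ i ∈ s, a ^ f i := by
  induction s using Finset.cons_induction with
  | empty => simp
  | cons i s hi ih => rw [Finset.sum_cons, Finset.prod_cons, zpow_add₀ ha, ih]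

theorem sum_fin_four_I_zpow_mul {k : ℤ} (hk : ¬ (4 : ℤ) ∣ k) :
    ∑ a : Fin 4, Complex.I ^ ((a : ℤ) * k) = 0 := by
  have hζ : Complex.I ^ k ≠ 1 := by
    rwa [Ne, Complex.isPrimitiveRoot_I.zpow_eq_one_iff_dvd]
  have hζ4 : (Complex.I ^ k) ^ 4 = 1 := by
    rw [← zpow_natCast, ← zpow_mul, mul_comm, zpow_mul, zpow_natCast, Complex.I_pow_four, one_zpow]
  simp_rw [mul_comm _ k, zpow_mul, zpow_natCast]
  rw [Fin.sum_univ_eq_sum_range (fun a => (Complex.I ^ k) ^ a), geom_sum_eq hζ, hζ4, sub_self,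
    zero_div]

theorem sum_I_zpow_sum_mul_eq_zero {ι : Type*} [Fintype ι] [DecidableEq ι] {k : ι → ℤ} {i₀ : ι}
    (hk : ¬ (4 : ℤ) ∣ k i₀) :
    ∑ d : ι → Fin 4, Complex.I ^ (∑ i, (d i : ℤ) * k i) = 0 := by
  simp only [zpow_finset_sum₀ Complex.I_ne_zero]
  rw [← Fintype.prod_sum fun i (a : Fin 4) => Complex.I ^ ((a : ℤ) * k i)]
  exact Finset.prod_eq_zero (Finset.mem_univ i₀) (sum_fin_four_I_zpow_mul hk)

theorem average_norm_sq_inner_eq {ι κ : Type*} [Fintype ι] [DecidableEq ι] [Fintype κ]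
    (v : κ → ι → ℂ) (c : ℝ)
    (hv : ∀ x y, (Fintype.card κ : ℂ)⁻¹ * ∑ k, v k x * conj (v k y) = if x = y then (c : ℂ) else 0)
    (ψ : ι → ℂ) :
    (Fintype.card κ : ℝ)⁻¹ * ∑ k, ‖∑ x, conj (v k x) * ψ x‖ ^ 2 = c * ∑ x, ‖ψ x‖ ^ 2 := by
  apply Complex.ofReal_injective
  have hexpand : ∀ k, (∑ x, conj (v k x) * ψ x) * conj (∑ x, conj (v k x) * ψ x) =
      ∑ x, ∑ y, ψ x * conj (ψ y) * (v k y * conj (v k x)) := by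
    intro k
    simp only [map_sum, map_mul, Complex.conj_conj, Finset.sum_mul_sum]
    exact Finset.sum_congr rfl fun x _ => Finset.sum_congr rfl fun y _ => by ring
  push_cast
  simp_rw [← Complex.mul_conj', hexpand]
  calc (Fintype.card κ : ℂ)⁻¹ * ∑ k, ∑ x, ∑ y, ψ x * conj (ψ y) * (v k y * conj (v k x))
      = ∑ x, ∑ y, ψ x * conj (ψ y) *
          ((Fintype.card κ : ℂ)⁻¹ * ∑ k, v k y * conj (v k x)) := by
        simp_rw [Finset.mul_sum]
        rw [Finset.sum_comm]
        refine Finset.sum_congr rfl fun x _ => ?_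
        rw [Finset.sum_comm]
        exact Finset.sum_congr rfl fun y _ => Finset.sum_congr rfl fun k _ => by ring
    _ = c * ∑ x, ψ x * conj (ψ x) := by
        simp_rw [hv, mul_ite, mul_zero, Finset.sum_ite_eq', Finset.mem_univ, if_true,
          Finset.mul_sum]
        exact Finset.sum_congr rfl fun x _ => by ring

def phase {n : ℕ} (D : Mdata n) (x : Fin n → Bool) : ℤ :=
  ∑ i, ∑ j, (if x i then 1 else 0 : ℤ) * mdataMatrix D i j * (if x j then 1 else 0)

theorem mdataMatrix_eq_add_diagonal {n : ℕ} (d : Fin n → Fin 4) (b : Fin n → Fin n → Bool) :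
    mdataMatrix (d, b) = mdataMatrix (0, b) + Matrix.diagonal fun i => (d i : ℤ) := by
  ext i j
  by_cases h : i = j <;> simp [mdataMatrix, h]

theorem phase_eq_add_sum {n : ℕ} (d : Fin n → Fin 4) (b : Fin n → Fin n → Bool)
    (x : Fin n → Bool) :
    phase (d, b) x = phase (0, b) x + ∑ i, (d i : ℤ) * (if x i then 1 else 0) := by
  simp only [phase, mdataMatrix_eq_add_diagonal d b, Matrix.add_apply, mul_add, add_mul,
    Finset.sum_add_distrib, Matrix.diagonal_apply]
  congr 1
  refine Finset.sum_congr rfl fun i _ => ?_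
  rw [Finset.sum_eq_single i (fun j _ hj => by simp [Ne.symm hj]) (by simp)]
  cases x i <;> simp

theorem sum_I_zpow_phase_sub_eq_zero {n : ℕ} {x y : Fin n → Bool} (hxy : x ≠ y) :
    ∑ D : Mdata n, Complex.I ^ (phase D x - phase D y) = 0 := by
  obtain ⟨i₀, hi₀⟩ := Function.ne_iff.mp hxy
  rw [Fintype.sum_prod_type, Finset.sum_comm]
  refine Finset.sum_eq_zero fun b _ => ?_
  have hsplit : ∀ d : Fin n → Fin 4, Complex.I ^ (phase (d, b) x - phase (d, b) y) =
      Complex.I ^ (phase (0, b) x - phase (0, b) y) *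
        Complex.I ^ ∑ i, (d i : ℤ) * ((if x i then 1 else 0) - (if y i then 1 else 0)) := by
    intro d
    rw [← zpow_add₀ Complex.I_ne_zero, phase_eq_add_sum d b, phase_eq_add_sum d b]
    simp only [mul_sub, Finset.sum_sub_distrib]
    ring_nf
  rw [Finset.sum_congr rfl fun d _ => hsplit d, ← Finset.mul_sum]
  have hk : ¬ (4 : ℤ) ∣ ((if x i₀ then 1 else 0) - (if y i₀ then 1 else 0)) := by
    generalize x i₀ = a at hi₀ ⊢
    generalize y i₀ = b at hi₀ ⊢
    cases a <;> cases b <;> simp_all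
  rw [sum_I_zpow_sum_mul_eq_zero (k := fun i => (if x i then 1 else 0) - (if y i then 1 else 0))
    hk, mul_zero]

theorem equatorial_mul_conj {n : ℕ} (D : Mdata n) (x y : Fin n → Bool) :
    equatorial D x * conj (equatorial D y) =
      ((2 : ℂ) ^ n)⁻¹ * Complex.I ^ (phase D x - phase D y) := by
  have hsqrt : ((Real.sqrt (2 ^ n) : ℝ) : ℂ) * ((Real.sqrt (2 ^ n) : ℝ) : ℂ) = 2 ^ n := by
    rw [← Complex.ofReal_mul, Real.mul_self_sqrt (by positivity)]
    push_cast; rfl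
  have hconj : conj (Complex.I ^ phase D y) = Complex.I ^ (-phase D y) := by
    rw [map_zpow₀, Complex.conj_I, ← Complex.inv_I, inv_zpow, zpow_neg]
  simp only [equatorial, map_mul, map_inv₀, Complex.conj_ofReal]
  rw [← phase, ← phase, hconj, mul_mul_mul_comm, ← mul_inv, hsqrt,
    ← zpow_add₀ Complex.I_ne_zero, sub_eq_add_neg]

theorem average_equatorial_mul_conj (n : ℕ) (x y : Fin n → Bool) :
    ((Fintype.card (Mdata n) : ℂ))⁻¹ * ∑ D : Mdata n, equatorial D x * conj (equatorial D y)
      = if x = y then ((2 : ℂ) ^ n)⁻¹ else 0 := by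
  simp_rw [equatorial_mul_conj, ← Finset.mul_sum]
  split_ifs with hxy
  · subst hxy
    have hcard : (Fintype.card (Mdata n) : ℂ) ≠ 0 := Nat.cast_ne_zero.mpr Fintype.card_ne_zero
    simp only [sub_self, zpow_zero, Finset.sum_const, Finset.card_univ, nsmul_eq_mul, mul_one]
    field_simp
  · rw [sum_I_zpow_phase_sub_eq_zero hxy, mul_zero, mul_zero]

/-- First moment of uniformly random equatorial states:
`E_A[|φ_A⟩⟨φ_A|] = 2^{−n} I`, and hence `E_A[2ⁿ|⟨φ_A|ψ⟩|²] = ‖ψ‖²` for all `ψ`. -/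
theorem equatorial_first_moment (n : ℕ) :
    (∀ x y : Fin n → Bool,
      ((Fintype.card (Mdata n) : ℂ))⁻¹ *
          ∑ D : Mdata n, equatorial D x * conj (equatorial D y)
        = if x = y then ((2 : ℂ) ^ n)⁻¹ else 0)
    ∧ ∀ ψ : (Fin n → Bool) → ℂ,
      ((Fintype.card (Mdata n) : ℝ))⁻¹ *
          ∑ D : Mdata n, 2 ^ n * ‖∑ x, conj (equatorial D x) * ψ x‖ ^ 2
        = ∑ x, ‖ψ x‖ ^ 2 := by
  refine ⟨average_equatorial_mul_conj n, fun ψ => ?_⟩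
  have h := average_norm_sq_inner_eq equatorial ((2 : ℝ) ^ n)⁻¹
    (by push_cast; exact average_equatorial_mul_conj n) ψ
  rw [← Finset.mul_sum, mul_left_comm, h, ← mul_assoc, mul_inv_cancel₀ (by positivity), one_mul]
end
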